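/- arXiv:1804.04170 — 10 statements merged into one kernel-verified Lean document; each statement's English description precedes it below -/
import Mathlib

section
/- Let T > 0, f0 > 0, φ > 0, g0 ∈ ℝ and κ ∈ ℝ with κ − g0/2 − √(φ·f0) ≠ 0. Define γ := √(φ/f0), ζ := (κ − g0/2 + √(φ·f0))/(κ − g0/2 − √(φ·f0)), θ0(t) := (1 + ζ·exp(2γ(T−t)))/(1 − ζ·exp(2γ(T−t))), and h0(t) := −g0/2 + √(φ·f0)·θ0(t). Assume ζ·exp(2γ(T−t)) ≠ 1 for every t ∈ [0,T]. Then h0 solves the Riccati terminal value problem: for every t ∈ [0,T], h0′(t) + h0(t)²/f0 + (g0/f0)·h0(t) + g0²/(4f0) − φ = 0, and h0(T) = −κ. -/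
/-!
With `u = ζ e^{2γ(T-t)}` one has `u' = -2γu`, so the Cayley transform `θ = (1 + u)/(1 - u)`
solves `θ' = γ(1 - θ²)`. Completing the square, the Riccati expression for `h = -g₀/2 + sθ`
with `s = √(φ f₀)` is `h' + (h + g₀/2)²/f₀ - φ = sγ(1 - θ²) + (s²/f₀)θ² - φ`, which vanishes
because `sγ = s²/f₀ = φ`. At `t = T` the Cayley transform inverts the Möbius map defining `ζ`.
-/

open Real Set

theorem hasDerivAt_const_mul_exp_mul_sub (ζ c T t : ℝ) :
    HasDerivAt (fun τ => ζ * exp (2 * c * (T - τ)))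
      (-(2 * c) * (ζ * exp (2 * c * (T - t)))) t := by
  refine ((((hasDerivAt_id t).const_sub T).const_mul (2 * c)).exp.const_mul ζ).congr_deriv ?_
  simp only [id]
  ring

theorem hasDerivAt_cayley_of_hasDerivAt_eq_mul {u : ℝ → ℝ} {c t : ℝ}
    (hu : HasDerivAt u (-(2 * c) * u t) t) (hne : u t ≠ 1) :
    HasDerivAt (fun τ => (1 + u τ) / (1 - u τ))
      (c * (1 - ((1 + u t) / (1 - u t)) ^ 2)) t := by
  have hden : 1 - u t ≠ 0 := sub_ne_zero.mpr hne.symm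
  refine ((hu.const_add 1).div (hu.const_sub 1) hden).congr_deriv ?_
  field_simp
  ring

theorem cayley_div_add_div_sub {a s : ℝ} (has : a - s ≠ 0) (hs : s ≠ 0) :
    (1 + (a + s) / (a - s)) / (1 - (a + s) / (a - s)) = -a / s := by
  rw [one_add_div has, one_sub_div has, div_div_div_cancel_right₀ has,
    div_eq_div_iff (by contrapose! hs; linarith) hs]
  ring

theorem sqrt_mul_mul_sqrt_div {φ f : ℝ} (hφ : 0 ≤ φ) (hf : 0 < f) :
    √(φ * f) * √(φ / f) = φ := by
  rw [← sqrt_mul (by positivity), show φ * f * (φ / f) = φ ^ 2 by field_simp, sqrt_sq hφ]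

theorem stmt_0_general (T f0 φ g0 κ : ℝ) (hf0 : 0 < f0) (hφ : 0 < φ)
    (hκ : κ - g0 / 2 - Real.sqrt (φ * f0) ≠ 0)
    (γ ζ : ℝ)
    (hγ : γ = Real.sqrt (φ / f0))
    (hζ : ζ = (κ - g0 / 2 + Real.sqrt (φ * f0)) / (κ - g0 / 2 - Real.sqrt (φ * f0)))
    (θ0 h0 : ℝ → ℝ)
    (hθ0 : ∀ t, θ0 t = (1 + ζ * Real.exp (2 * γ * (T - t))) /
                       (1 - ζ * Real.exp (2 * γ * (T - t))))
    (hh0 : ∀ t, h0 t = -g0 / 2 + Real.sqrt (φ * f0) * θ0 t)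
    (hnd : ∀ t ∈ Set.Icc (0 : ℝ) T, ζ * Real.exp (2 * γ * (T - t)) ≠ 1) :
    (∀ t ∈ Set.Icc (0 : ℝ) T,
        deriv h0 t + (h0 t) ^ 2 / f0 + (g0 / f0) * h0 t + g0 ^ 2 / (4 * f0) - φ = 0)
    ∧ h0 T = -κ := by
  set s := √(φ * f0)
  have hs : 0 < s := sqrt_pos.mpr (by positivity)
  have hsq : s ^ 2 = φ * f0 := sq_sqrt (by positivity)
  have hsγ : s * γ = φ := hγ ▸ sqrt_mul_mul_sqrt_div hφ.le hf0
  refine ⟨fun t ht => ?_, ?_⟩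
  · have hθ : HasDerivAt θ0 (γ * (1 - θ0 t ^ 2)) t := by
      rw [funext hθ0]
      exact hasDerivAt_cayley_of_hasDerivAt_eq_mul
        (hasDerivAt_const_mul_exp_mul_sub ζ γ T t) (hnd t ht)
    have hh : HasDerivAt h0 (s * (γ * (1 - θ0 t ^ 2))) t := by
      rw [funext hh0]
      exact (hθ.const_mul s).const_add _
    rw [hh.deriv, hh0 t]
    field_simp
    linear_combination (16 * (1 - θ0 t ^ 2) * f0) * hsγ + (16 * θ0 t ^ 2) * hsq
  · rw [hh0, hθ0, sub_self, mul_zero, exp_zero, mul_one, hζ, cayley_div_add_div_sub hκ hs.ne']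
    field_simp
    ring

theorem stmt_0 (T f0 φ g0 κ : ℝ) (hT : 0 < T) (hf0 : 0 < f0) (hφ : 0 < φ)
    (hκ : κ - g0 / 2 - Real.sqrt (φ * f0) ≠ 0)
    (γ ζ : ℝ)
    (hγ : γ = Real.sqrt (φ / f0))
    (hζ : ζ = (κ - g0 / 2 + Real.sqrt (φ * f0)) / (κ - g0 / 2 - Real.sqrt (φ * f0)))
    (θ0 h0 : ℝ → ℝ)
    (hθ0 : ∀ t, θ0 t = (1 + ζ * Real.exp (2 * γ * (T - t))) /
                       (1 - ζ * Real.exp (2 * γ * (T - t))))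
    (hh0 : ∀ t, h0 t = -g0 / 2 + Real.sqrt (φ * f0) * θ0 t)
    (hnd : ∀ t ∈ Set.Icc (0 : ℝ) T, ζ * Real.exp (2 * γ * (T - t)) ≠ 1) :
    (∀ t ∈ Set.Icc (0 : ℝ) T,
        deriv h0 t + (h0 t) ^ 2 / f0 + (g0 / f0) * h0 t + g0 ^ 2 / (4 * f0) - φ = 0)
    ∧ h0 T = -κ :=
  stmt_0_general T f0 φ g0 κ hf0 hφ hκ γ ζ hγ hζ θ0 h0 hθ0 hh0 hnd
end

section
/- Let T > 0, γ > 0 and ζ ∈ ℝ. Define θ0(r) := (1 + ζ·exp(2γ(T−r)))/(1 − ζ·exp(2γ(T−r))) and Ψ0(t,s) := exp(−2γ(s−t))·((ζ·exp(2γT) − exp(2γs))/(ζ·exp(2γT) − exp(2γt)))². Fix t ≤ s ≤ T and assume ζ·exp(2γ(T−r)) ≠ 1 for every r ∈ [t,s]. Then exp(2γ·∫_t^s θ0(r) dr) = Ψ0(t,s). -/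
/-!
Writing `c = ζ e^{2γT}` and multiplying numerator and denominator by `e^{2γr}`, the integrand
becomes `(e^{2γr} + c) / (e^{2γr} - c) = -1 + 2 e^{2γr} / (e^{2γr} - c)`, which has the explicit
antiderivative `-r + γ⁻¹ log |c - e^{2γr}|`. Exponentiating `2γ` times the difference of its values
at `s` and `t` turns the logarithms into the squared ratio of `Ψ0`.
-/

open Real Set MeasureTheory

lemma one_add_mul_exp_div_one_sub_mul_exp (a ζ T r : ℝ) :
    (1 + ζ * exp (a * (T - r))) / (1 - ζ * exp (a * (T - r))) =
      (exp (a * r) + ζ * exp (a * T)) / (exp (a * r) - ζ * exp (a * T)) := by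
  have hsplit : exp (a * (T - r)) * exp (a * r) = exp (a * T) := by
    rw [← exp_add]; ring_nf
  rw [← mul_div_mul_right _ _ (exp_ne_zero (a * r))]
  congr 1
  · linear_combination ζ * hsplit
  · linear_combination -ζ * hsplit

lemma mul_exp_sub_ne_one_iff (a ζ T r : ℝ) :
    ζ * exp (a * (T - r)) ≠ 1 ↔ exp (a * r) ≠ ζ * exp (a * T) := by
  rw [mul_sub, exp_sub, ← mul_div_assoc, Ne, div_eq_one_iff_eq (exp_ne_zero _), eq_comm]

/-- `Real.log` is `log |·|`, so this antiderivative is valid on both sides of the level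
`exp (a * r) = c`. -/
lemma hasDerivAt_neg_add_log_sub_exp {a c r : ℝ} (ha : a ≠ 0) (hr : exp (a * r) ≠ c) :
    HasDerivAt (fun x => -x + 2 / a * log (c - exp (a * x)))
      ((exp (a * r) + c) / (exp (a * r) - c)) r := by
  have hsub : c - exp (a * r) ≠ 0 := sub_ne_zero.mpr hr.symm
  have hexp : HasDerivAt (fun x => exp (a * x)) (exp (a * r) * a) r := by
    simpa using ((hasDerivAt_id r).const_mul a).exp
  have hlog : HasDerivAt (fun x => log (c - exp (a * x)))
      ((0 - exp (a * r) * a) / (c - exp (a * r))) r :=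
    ((hasDerivAt_const r c).sub hexp).log hsub
  refine ((hasDerivAt_neg r).add (hlog.const_mul (2 / a))).congr_deriv ?_
  field_simp
  ring

lemma integral_exp_add_div_exp_sub {a c t s : ℝ} (ha : a ≠ 0)
    (hc : ∀ r ∈ uIcc t s, exp (a * r) ≠ c) :
    ∫ r in t..s, (exp (a * r) + c) / (exp (a * r) - c) =
      -(s - t) + 2 / a * (log (c - exp (a * s)) - log (c - exp (a * t))) := by
  have hcont : ContinuousOn (fun r => (exp (a * r) + c) / (exp (a * r) - c)) (uIcc t s) :=
    ContinuousOn.div (by fun_prop) (by fun_prop) fun r hr => sub_ne_zero.mpr (hc r hr)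
  rw [intervalIntegral.integral_eq_sub_of_hasDerivAt
    (fun r hr => hasDerivAt_neg_add_log_sub_exp ha (hc r hr)) hcont.intervalIntegrable]
  ring

lemma exp_mul_integral_exp_add_div_exp_sub {a c t s : ℝ} (ha : a ≠ 0)
    (hc : ∀ r ∈ uIcc t s, exp (a * r) ≠ c) :
    exp (a * ∫ r in t..s, (exp (a * r) + c) / (exp (a * r) - c)) =
      exp (-(a * (s - t))) * ((c - exp (a * s)) / (c - exp (a * t))) ^ 2 := by
  have exp_two_mul_log {x : ℝ} (hx : x ≠ 0) : exp (2 * log x) = x ^ 2 := by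
    rw [← Nat.cast_ofNat, ← log_pow, exp_log (sq_pos_iff.mpr hx)]
  have hs := sub_ne_zero.mpr (hc s right_mem_uIcc).symm
  have ht := sub_ne_zero.mpr (hc t left_mem_uIcc).symm
  rw [integral_exp_add_div_exp_sub ha hc, div_pow, ← exp_two_mul_log hs, ← exp_two_mul_log ht,
    ← exp_sub, ← exp_add]
  congr 1
  field_simp

theorem stmt_2_general (T γ ζ : ℝ) (hγ : 0 < γ)
    (θ0 : ℝ → ℝ)
    (hθ0 : ∀ r, θ0 r = (1 + ζ * Real.exp (2 * γ * (T - r))) /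
                       (1 - ζ * Real.exp (2 * γ * (T - r))))
    (Ψ0 : ℝ → ℝ → ℝ)
    (hΨ0 : ∀ t s, Ψ0 t s = Real.exp (-2 * γ * (s - t)) *
        ((ζ * Real.exp (2 * γ * T) - Real.exp (2 * γ * s)) /
         (ζ * Real.exp (2 * γ * T) - Real.exp (2 * γ * t))) ^ 2)
    (t s : ℝ) (hts : t ≤ s)
    (hnd : ∀ r ∈ Set.Icc t s, ζ * Real.exp (2 * γ * (T - r)) ≠ 1) :
    Real.exp (2 * γ * ∫ r in t..s, θ0 r) = Ψ0 t s := by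
  have hc : ∀ r ∈ uIcc t s, exp (2 * γ * r) ≠ ζ * exp (2 * γ * T) := fun r hr =>
    (mul_exp_sub_ne_one_iff _ _ _ _).mp (hnd r (uIcc_of_le hts ▸ hr))
  simp only [hθ0, one_add_mul_exp_div_one_sub_mul_exp, hΨ0, neg_mul]
  exact exp_mul_integral_exp_add_div_exp_sub (by positivity) hc

theorem stmt_2 (T γ ζ : ℝ) (hT : 0 < T) (hγ : 0 < γ)
    (θ0 : ℝ → ℝ)
    (hθ0 : ∀ r, θ0 r = (1 + ζ * Real.exp (2 * γ * (T - r))) /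
                       (1 - ζ * Real.exp (2 * γ * (T - r))))
    (Ψ0 : ℝ → ℝ → ℝ)
    (hΨ0 : ∀ t s, Ψ0 t s = Real.exp (-2 * γ * (s - t)) *
        ((ζ * Real.exp (2 * γ * T) - Real.exp (2 * γ * s)) /
         (ζ * Real.exp (2 * γ * T) - Real.exp (2 * γ * t))) ^ 2)
    (t s : ℝ) (hts : t ≤ s) (hsT : s ≤ T)
    (hnd : ∀ r ∈ Set.Icc t s, ζ * Real.exp (2 * γ * (T - r)) ≠ 1) :
    Real.exp (2 * γ * ∫ r in t..s, θ0 r) = Ψ0 t s :=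
  stmt_2_general T γ ζ hγ θ0 hθ0 Ψ0 hΨ0 t s hts hnd
end

section
/- Let T > 0, γ > 0, ζ ∈ ℝ, μ0, η0 ∈ ℝ, ω0 > 0, ψ0 > 0, ρ ∈ (−1,1). Define θ0(t) := (1 + ζ·exp(2γ(T−t)))/(1 − ζ·exp(2γ(T−t))) and Ψ0(t,s) := exp(−2γ(s−t))·((ζ·exp(2γT) − exp(2γs))/(ζ·exp(2γT) − exp(2γt)))². Fix s ∈ (0,T] and (α,β) ∈ ℝ², and for t < s and (a,b) ∈ ℝ² define G(t,a,b) := Ψ0(t,s)/(2π(s−t)ω0ψ0√(1−ρ²)) · exp( −1/(2(s−t)(1−ρ²)) · [ (α−a−μ0(s−t))²/ω0² − 2ρ(α−a−μ0(s−t))(β−b−η0(s−t))/(ω0ψ0) + (β−b−η0(s−t))²/ψ0² ] ). Then for every t < s with ζ·exp(2γ(T−r)) ≠ 1 for r ∈ {t} and ζ·exp(2γT) ≠ exp(2γt), and every (a,b) ∈ ℝ², ∂_t G + (1/2)ω0²·∂_a²G + ρω0ψ0·∂_a∂_b G + (1/2)ψ0²·∂_b²G + μ0·∂_a G + η0·∂_b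 G + 2γθ0(t)·G = 0 at (t,a,b). -/
/-!
Write `u = s - t` and `Σ = [[ω0², ρω0ψ0], [ρω0ψ0, ψ0²]]`. Then
`G(t, a, b) = Ψ0(t, s) · p(u, α - a - μ0 u, β - b - η0 u)`, where `p(u, ·)` is the density of the
centred normal law with covariance `uΣ`. This density solves the heat equation
`∂_u p = ½ (ω0² ∂_x² + 2ρω0ψ0 ∂_x∂_y + ψ0² ∂_y²) p`: its gradient at `z = (x, y)` is
`-(Σ⁻¹z / u) p`, and the identities `(Σ⁻¹z)ᵀ Σ (Σ⁻¹z) = zᵀΣ⁻¹z` and `tr(ΣΣ⁻¹) = 2` match the two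
sides. The chain rule turns the heat equation into the backward equation with drift `(μ0, η0)`.
The prefactor satisfies `∂_t Ψ0 = -2γθ0 Ψ0` and absorbs the zeroth-order term.
-/

open Real

noncomputable section

def bivariateQuadForm (σ₁ σ₂ ρ x y : ℝ) : ℝ :=
  x ^ 2 / σ₁ ^ 2 - 2 * ρ * x * y / (σ₁ * σ₂) + y ^ 2 / σ₂ ^ 2

/-- The density at `(x, y)` of the centred normal law with covariance
`u • !![σ₁ ^ 2, ρ * σ₁ * σ₂; ρ * σ₁ * σ₂, σ₂ ^ 2]`. -/
def bivariateGaussianPDF (σ₁ σ₂ ρ u x y : ℝ) : ℝ :=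
  1 / (2 * π * u * σ₁ * σ₂ * √(1 - ρ ^ 2)) *
    exp (-(1 / (2 * u * (1 - ρ ^ 2))) * bivariateQuadForm σ₁ σ₂ ρ x y)

end

section BivariateGaussian

variable (σ₁ σ₂ ρ : ℝ)

theorem hasDerivAt_bivariateQuadForm_comp {x y : ℝ → ℝ} {x' y' t : ℝ}
    (hx : HasDerivAt x x' t) (hy : HasDerivAt y y' t) :
    HasDerivAt (fun τ => bivariateQuadForm σ₁ σ₂ ρ (x τ) (y τ))
      (2 * (x t / σ₁ ^ 2 - ρ * y t / (σ₁ * σ₂)) * x'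
        + 2 * (y t / σ₂ ^ 2 - ρ * x t / (σ₁ * σ₂)) * y') t := by
  unfold bivariateQuadForm
  refine ((((hx.pow 2).div_const _).sub (((hx.const_mul (2 * ρ)).mul hy).div_const _)).add
    ((hy.pow 2).div_const _)).congr_deriv ?_
  push_cast
  ring

theorem hasDerivAt_bivariateGaussianPDF_comp {u x y : ℝ → ℝ} {u' x' y' t : ℝ}
    (hu : HasDerivAt u u' t) (hx : HasDerivAt x x' t) (hy : HasDerivAt y y' t) (hu₀ : u t ≠ 0) :
    HasDerivAt (fun τ => bivariateGaussianPDF σ₁ σ₂ ρ (u τ) (x τ) (y τ))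
      (((bivariateQuadForm σ₁ σ₂ ρ (x t) (y t) / (2 * u t ^ 2 * (1 - ρ ^ 2)) - 1 / u t) * u'
        - ((x t / σ₁ ^ 2 - ρ * y t / (σ₁ * σ₂)) * x' + (y t / σ₂ ^ 2 - ρ * x t / (σ₁ * σ₂)) * y')
          / (u t * (1 - ρ ^ 2)))
        * bivariateGaussianPDF σ₁ σ₂ ρ (u t) (x t) (y t)) t := by
  unfold bivariateGaussianPDF
  -- otherwise `ring` treats `(2 * u τ * (1 - ρ ^ 2))⁻¹` as the inverse of an opaque sum
  generalize 1 - ρ ^ 2 = d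
  have hinv := hu.fun_inv hu₀
  have hnorm : HasDerivAt (fun τ => 1 / (2 * π * u τ * σ₁ * σ₂ * √d))
      (-u' / u t ^ 2 * (2 * π * σ₁ * σ₂ * √d)⁻¹) t :=
    (hinv.mul_const (2 * π * σ₁ * σ₂ * √d)⁻¹).congr_of_eventuallyEq (.of_forall fun τ => by ring)
  have hrate : HasDerivAt (fun τ => -(1 / (2 * u τ * d))) (u' / u t ^ 2 * (2 * d)⁻¹) t :=
    ((hinv.mul_const (2 * d)⁻¹).fun_neg.congr_deriv (by ring)).congr_of_eventuallyEq
      (.of_forall fun τ => by ring)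
  refine (hnorm.fun_mul
    (hrate.fun_mul (hasDerivAt_bivariateQuadForm_comp σ₁ σ₂ ρ hx hy)).exp).congr_deriv ?_
  ring

theorem hasDerivAt_bivariateGaussianPDF_fst {u : ℝ} (hu : u ≠ 0) (x y : ℝ) :
    HasDerivAt (fun x => bivariateGaussianPDF σ₁ σ₂ ρ u x y)
      (-((x / σ₁ ^ 2 - ρ * y / (σ₁ * σ₂)) / (u * (1 - ρ ^ 2)))
        * bivariateGaussianPDF σ₁ σ₂ ρ u x y) x :=
  (hasDerivAt_bivariateGaussianPDF_comp σ₁ σ₂ ρ (hasDerivAt_const x u) (hasDerivAt_id' x)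
    (hasDerivAt_const x y) hu).congr_deriv (by ring)

theorem hasDerivAt_bivariateGaussianPDF_snd {u : ℝ} (hu : u ≠ 0) (x y : ℝ) :
    HasDerivAt (fun y => bivariateGaussianPDF σ₁ σ₂ ρ u x y)
      (-((y / σ₂ ^ 2 - ρ * x / (σ₁ * σ₂)) / (u * (1 - ρ ^ 2)))
        * bivariateGaussianPDF σ₁ σ₂ ρ u x y) y :=
  (hasDerivAt_bivariateGaussianPDF_comp σ₁ σ₂ ρ (hasDerivAt_const y u) (hasDerivAt_const y x)
    (hasDerivAt_id' y) hu).congr_deriv (by ring)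

theorem hasDerivAt_bivariateGaussianPDF_time {u : ℝ} (hu : u ≠ 0) (x y : ℝ) :
    HasDerivAt (fun u => bivariateGaussianPDF σ₁ σ₂ ρ u x y)
      ((bivariateQuadForm σ₁ σ₂ ρ x y / (2 * u ^ 2 * (1 - ρ ^ 2)) - 1 / u)
        * bivariateGaussianPDF σ₁ σ₂ ρ u x y) u :=
  (hasDerivAt_bivariateGaussianPDF_comp σ₁ σ₂ ρ (hasDerivAt_id' u) (hasDerivAt_const u x)
    (hasDerivAt_const u y) hu).congr_deriv (by ring)

theorem hasDerivAt_bivariateGaussianPDF_comp_deriv {u x y : ℝ → ℝ} {u' x' y' t : ℝ}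
    (hu : HasDerivAt u u' t) (hx : HasDerivAt x x' t) (hy : HasDerivAt y y' t) (hu₀ : u t ≠ 0) :
    HasDerivAt (fun τ => bivariateGaussianPDF σ₁ σ₂ ρ (u τ) (x τ) (y τ))
      (deriv (fun u => bivariateGaussianPDF σ₁ σ₂ ρ u (x t) (y t)) (u t) * u'
        + deriv (fun x => bivariateGaussianPDF σ₁ σ₂ ρ (u t) x (y t)) (x t) * x'
        + deriv (fun y => bivariateGaussianPDF σ₁ σ₂ ρ (u t) (x t) y) (y t) * y') t := by
  rw [(hasDerivAt_bivariateGaussianPDF_time σ₁ σ₂ ρ hu₀ _ _).deriv,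
    (hasDerivAt_bivariateGaussianPDF_fst σ₁ σ₂ ρ hu₀ _ _).deriv,
    (hasDerivAt_bivariateGaussianPDF_snd σ₁ σ₂ ρ hu₀ _ _).deriv]
  exact (hasDerivAt_bivariateGaussianPDF_comp σ₁ σ₂ ρ hu hx hy hu₀).congr_deriv (by ring)

theorem bivariateGaussianPDF_heat {u : ℝ} (hu : u ≠ 0) (x y : ℝ)
    (hσ₁ : σ₁ ≠ 0) (hσ₂ : σ₂ ≠ 0) (hρ : 1 - ρ ^ 2 ≠ 0) :
    deriv (fun u => bivariateGaussianPDF σ₁ σ₂ ρ u x y) u =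
      1 / 2 * (σ₁ ^ 2 * deriv (fun x => deriv (fun x' => bivariateGaussianPDF σ₁ σ₂ ρ u x' y) x) x
        + 2 * ρ * σ₁ * σ₂
          * deriv (fun x => deriv (fun y' => bivariateGaussianPDF σ₁ σ₂ ρ u x y') y) x
        + σ₂ ^ 2 * deriv (fun y => deriv (fun y' => bivariateGaussianPDF σ₁ σ₂ ρ u x y') y) y) := by
  have hfst (y : ℝ) :=
    funext fun x => (hasDerivAt_bivariateGaussianPDF_fst σ₁ σ₂ ρ hu x y).deriv
  have hsnd (x : ℝ) :=
    funext fun y => (hasDerivAt_bivariateGaussianPDF_snd σ₁ σ₂ ρ hu x y).deriv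
  simp only [hfst, hsnd]
  have hxx := ((((hasDerivAt_id' x).div_const (σ₁ ^ 2)).sub_const (ρ * y / (σ₁ * σ₂))).div_const
    (u * (1 - ρ ^ 2))).fun_neg.fun_mul (hasDerivAt_bivariateGaussianPDF_fst σ₁ σ₂ ρ hu x y)
  have hxy := (((((hasDerivAt_id' x).const_mul ρ).div_const (σ₁ * σ₂)).const_sub
    (y / σ₂ ^ 2)).div_const (u * (1 - ρ ^ 2))).fun_neg.fun_mul
    (hasDerivAt_bivariateGaussianPDF_fst σ₁ σ₂ ρ hu x y)
  have hyy := ((((hasDerivAt_id' y).div_const (σ₂ ^ 2)).sub_const (ρ * x / (σ₁ * σ₂))).div_const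
    (u * (1 - ρ ^ 2))).fun_neg.fun_mul (hasDerivAt_bivariateGaussianPDF_snd σ₁ σ₂ ρ hu x y)
  rw [(hasDerivAt_bivariateGaussianPDF_time σ₁ σ₂ ρ hu x y).deriv, hxx.deriv, hxy.deriv, hyy.deriv]
  unfold bivariateQuadForm
  field_simp
  ring

end BivariateGaussian

section Reflection

variable {𝕜 F : Type*} [NontriviallyNormedField 𝕜] [NormedAddCommGroup F] [NormedSpace 𝕜 F]

theorem deriv_comp_sub_sub (f : 𝕜 → F) (c d : 𝕜) :
    deriv (fun x => f (c - x - d)) = fun x => -deriv f (c - x - d) := by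
  simp_rw [sub_right_comm c _ d]
  exact funext fun x => deriv_comp_const_sub f (c - d) x

theorem deriv_deriv_comp_sub_sub (f : 𝕜 → F) (c d : 𝕜) :
    deriv (fun x => deriv (fun x' => f (c - x' - d)) x) = fun x => deriv (deriv f) (c - x - d) := by
  rw [deriv_comp_sub_sub, deriv.fun_neg', deriv_comp_sub_sub]
  simp only [neg_neg]

theorem deriv_deriv_comp_sub_sub_mixed (g : 𝕜 → 𝕜 → F) (c d c' d' a b : 𝕜) :
    deriv (fun x => deriv (fun y => g (c - x - d) (c' - y - d')) b) a =
      deriv (fun x => deriv (fun y => g x y) (c' - b - d')) (c - a - d) := by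
  simp only [deriv_comp_sub_sub (g _), deriv.fun_neg]
  rw [deriv_comp_sub_sub (fun x => deriv (g x) (c' - b - d')), neg_neg]

end Reflection

theorem hasDerivAt_exp_mul_ratio_sq (γ ζ T s t : ℝ) (h : ζ * exp (2 * γ * T) ≠ exp (2 * γ * t)) :
    HasDerivAt (fun τ => exp (-2 * γ * (s - τ)) *
        ((ζ * exp (2 * γ * T) - exp (2 * γ * s)) / (ζ * exp (2 * γ * T) - exp (2 * γ * τ))) ^ 2)
      (-(2 * γ * ((1 + ζ * exp (2 * γ * (T - t))) / (1 - ζ * exp (2 * γ * (T - t))))) *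
        (exp (-2 * γ * (s - t)) *
          ((ζ * exp (2 * γ * T) - exp (2 * γ * s)) / (ζ * exp (2 * γ * T) - exp (2 * γ * t))) ^ 2))
      t := by
  have hw : ζ * exp (2 * γ * T) - exp (2 * γ * t) ≠ 0 := sub_ne_zero.2 h
  have hτ : HasDerivAt (fun τ => 2 * γ * τ) (2 * γ) t :=
    ((hasDerivAt_id' t).const_mul (2 * γ)).congr_deriv (by ring)
  refine ((((hasDerivAt_id' t).const_sub s).const_mul (-2 * γ)).exp.fun_mul
    (((hasDerivAt_const t _).fun_div (hτ.exp.const_sub _) hw).fun_pow 2)).congr_deriv ?_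
  rw [show 2 * γ * (T - t) = 2 * γ * T - 2 * γ * t by ring, exp_sub]
  have hw' : 1 - ζ * (exp (2 * γ * T) / exp (2 * γ * t)) ≠ 0 := by
    rw [mul_div_assoc', one_sub_div (exp_pos _).ne']
    exact div_ne_zero (sub_ne_zero.2 (Ne.symm h)) (exp_pos _).ne'
  norm_num only [Nat.cast_ofNat, pow_one]
  field_simp
  ring

theorem stmt_3_general (T γ ζ μ0 η0 ω0 ψ0 ρ : ℝ)
    (hω0 : 0 < ω0) (hψ0 : 0 < ψ0)
    (hρ : ρ ∈ Set.Ioo (-1 : ℝ) 1)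
    (θ0 : ℝ → ℝ)
    (hθ0 : ∀ t, θ0 t = (1 + ζ * Real.exp (2 * γ * (T - t))) /
                       (1 - ζ * Real.exp (2 * γ * (T - t))))
    (Ψ0 : ℝ → ℝ → ℝ)
    (hΨ0 : ∀ t s, Ψ0 t s = Real.exp (-2 * γ * (s - t)) *
        ((ζ * Real.exp (2 * γ * T) - Real.exp (2 * γ * s)) /
         (ζ * Real.exp (2 * γ * T) - Real.exp (2 * γ * t))) ^ 2)
    (s : ℝ) (α β : ℝ)
    (G : ℝ → ℝ → ℝ → ℝ)
    (hG : ∀ t a b, G t a b =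
        Ψ0 t s / (2 * π * (s - t) * ω0 * ψ0 * Real.sqrt (1 - ρ ^ 2)) *
        Real.exp (-(1 / (2 * (s - t) * (1 - ρ ^ 2))) *
          ((α - a - μ0 * (s - t)) ^ 2 / ω0 ^ 2
            - 2 * ρ * (α - a - μ0 * (s - t)) * (β - b - η0 * (s - t)) / (ω0 * ψ0)
            + (β - b - η0 * (s - t)) ^ 2 / ψ0 ^ 2))) :
    ∀ t : ℝ, t < s →
      ζ * Real.exp (2 * γ * (T - t)) ≠ 1 →
      ζ * Real.exp (2 * γ * T) ≠ Real.exp (2 * γ * t) →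
      ∀ a b : ℝ,
        deriv (fun τ => G τ a b) t
          + (1 / 2) * ω0 ^ 2 * deriv (fun x => deriv (fun x' => G t x' b) x) a
          + ρ * ω0 * ψ0 * deriv (fun x => deriv (fun y => G t x y) b) a
          + (1 / 2) * ψ0 ^ 2 * deriv (fun y => deriv (fun y' => G t a y') y) b
          + μ0 * deriv (fun x => G t x b) a
          + η0 * deriv (fun y => G t a y) b
          + 2 * γ * θ0 t * G t a b = 0 := by
  intro t ht _ hζ a b
  have hu : s - t ≠ 0 := (sub_pos.2 ht).ne'
  have hGp : ∀ τ x y, G τ x y = Ψ0 τ s *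
      bivariateGaussianPDF ω0 ψ0 ρ (s - τ) (α - x - μ0 * (s - τ)) (β - y - η0 * (s - τ)) := by
    intro τ x y
    rw [hG, bivariateGaussianPDF, bivariateQuadForm]
    ring
  have hΨ : HasDerivAt (fun τ => Ψ0 τ s) (-(2 * γ * θ0 t) * Ψ0 t s) t := by
    simp only [hΨ0, hθ0]
    exact hasDerivAt_exp_mul_ratio_sq γ ζ T s t hζ
  have hst := (hasDerivAt_id' t).const_sub s
  have hp := hasDerivAt_bivariateGaussianPDF_comp_deriv ω0 ψ0 ρ hst
    ((hst.const_mul μ0).const_sub (α - a)) ((hst.const_mul η0).const_sub (β - b)) hu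
  have heat := bivariateGaussianPDF_heat ω0 ψ0 ρ hu (α - a - μ0 * (s - t)) (β - b - η0 * (s - t))
    hω0.ne' hψ0.ne' (by nlinarith [hρ.1, hρ.2] : (0 : ℝ) < 1 - ρ ^ 2).ne'
  simp only [hGp, deriv_const_mul_field]
  rw [(hΨ.fun_mul hp).deriv,
    deriv_deriv_comp_sub_sub
      (fun x => bivariateGaussianPDF ω0 ψ0 ρ (s - t) x (β - b - η0 * (s - t))),
    deriv_deriv_comp_sub_sub_mixed (bivariateGaussianPDF ω0 ψ0 ρ (s - t)),
    deriv_deriv_comp_sub_sub (bivariateGaussianPDF ω0 ψ0 ρ (s - t) (α - a - μ0 * (s - t))),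
    deriv_comp_sub_sub (fun x => bivariateGaussianPDF ω0 ψ0 ρ (s - t) x (β - b - η0 * (s - t))),
    deriv_comp_sub_sub (bivariateGaussianPDF ω0 ψ0 ρ (s - t) (α - a - μ0 * (s - t)))]
  linear_combination -Ψ0 t s * heat

theorem stmt_3 (T γ ζ μ0 η0 ω0 ψ0 ρ : ℝ)
    (hT : 0 < T) (hγ : 0 < γ) (hω0 : 0 < ω0) (hψ0 : 0 < ψ0)
    (hρ : ρ ∈ Set.Ioo (-1 : ℝ) 1)
    (θ0 : ℝ → ℝ)
    (hθ0 : ∀ t, θ0 t = (1 + ζ * Real.exp (2 * γ * (T - t))) /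
                       (1 - ζ * Real.exp (2 * γ * (T - t))))
    (Ψ0 : ℝ → ℝ → ℝ)
    (hΨ0 : ∀ t s, Ψ0 t s = Real.exp (-2 * γ * (s - t)) *
        ((ζ * Real.exp (2 * γ * T) - Real.exp (2 * γ * s)) /
         (ζ * Real.exp (2 * γ * T) - Real.exp (2 * γ * t))) ^ 2)
    (s : ℝ) (hs : s ∈ Set.Ioc (0 : ℝ) T) (α β : ℝ)
    (G : ℝ → ℝ → ℝ → ℝ)
    (hG : ∀ t a b, G t a b =
        Ψ0 t s / (2 * π * (s - t) * ω0 * ψ0 * Real.sqrt (1 - ρ ^ 2)) *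
        Real.exp (-(1 / (2 * (s - t) * (1 - ρ ^ 2))) *
          ((α - a - μ0 * (s - t)) ^ 2 / ω0 ^ 2
            - 2 * ρ * (α - a - μ0 * (s - t)) * (β - b - η0 * (s - t)) / (ω0 * ψ0)
            + (β - b - η0 * (s - t)) ^ 2 / ψ0 ^ 2))) :
    ∀ t : ℝ, t < s →
      ζ * Real.exp (2 * γ * (T - t)) ≠ 1 →
      ζ * Real.exp (2 * γ * T) ≠ Real.exp (2 * γ * t) →
      ∀ a b : ℝ,
        deriv (fun τ => G τ a b) t
          + (1 / 2) * ω0 ^ 2 * deriv (fun x => deriv (fun x' => G t x' b) x) a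
          + ρ * ω0 * ψ0 * deriv (fun x => deriv (fun y => G t x y) b) a
          + (1 / 2) * ψ0 ^ 2 * deriv (fun y => deriv (fun y' => G t a y') y) b
          + μ0 * deriv (fun x => G t x b) a
          + η0 * deriv (fun y => G t a y) b
          + 2 * γ * θ0 t * G t a b = 0 :=
  stmt_3_general T γ ζ μ0 η0 ω0 ψ0 ρ hω0 hψ0 hρ θ0 hθ0 Ψ0 hΨ0 s α β G hG
end

section
/- Let T > 0, γ > 0, ζ ∈ ℝ, and define θ0(s) := (1 + ζ·exp(2γ(T−s)))/(1 − ζ·exp(2γ(T−s))) and Ψ0(t,s) := exp(−2γ(s−t))·((ζ·exp(2γT) − exp(2γs))/(ζ·exp(2γT) − exp(2γt)))². Fix t ≤ T and assume ζ·exp(2γT) ≠ exp(2γs) for every s ∈ [t,T]. Then ∫_t^T s·θ0(s)²·Ψ0(t,s) ds = [ exp(2γ(t+T))·(4γ²ζ(T²−t²) − ζ²(2γT+1) + 2γT − 1) + exp(4γt)·(1−2γt) + ζ²(2γt+1)·exp(4γT) ] / (4γ²·(exp(2γt) − ζ·exp(2γT))²). -/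
/-!
Writing `x = exp (2γs)` and `κ = ζ exp (2γT)`, one has `θ0 s = (x + κ) / (x - κ)` and
`Ψ0 t s = (exp (2γt) / x) ((κ - x) / (κ - exp (2γt)))²`, so the singular factor `(x - κ)²`
cancels and the integrand becomes `exp (2γt) / (κ - exp (2γt))² · s (x + 2κ + κ² / x)`.
This is a combination of `s`, `s exp (2γs)` and `s exp (-2γs)`, integrated by parts.
-/

open Real Set MeasureTheory

theorem integral_mul_exp_mul {c : ℝ} (hc : c ≠ 0) (a b : ℝ) :
    ∫ s in a..b, s * exp (c * s) =
      (exp (c * b) * (c * b - 1) - exp (c * a) * (c * a - 1)) / c ^ 2 := by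
  have hderiv (s : ℝ) :
      HasDerivAt (fun s => exp (c * s) * (c * s - 1) / c ^ 2) (s * exp (c * s)) s := by
    have hlin : HasDerivAt (fun s => c * s) c s := by
      simpa using (hasDerivAt_id s).const_mul c
    refine ((hlin.exp.mul (hlin.sub_const 1)).div_const (c ^ 2)).congr_deriv ?_
    field_simp
    ring
  rw [intervalIntegral.integral_eq_sub_of_hasDerivAt (fun s _ => hderiv s)
    ((by fun_prop : Continuous fun s => s * exp (c * s)).intervalIntegrable a b), sub_div]

theorem sq_div_mul_div_sq_eq {x y κ : ℝ} (hx : x ≠ 0) (hκx : κ ≠ x) :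
    ((1 + κ / x) / (1 - κ / x)) ^ 2 * (y / x * ((κ - x) / (κ - y)) ^ 2) =
      y / (κ - y) ^ 2 * (x + 2 * κ + κ ^ 2 / x) := by
  have hxκ : x - κ ≠ 0 := sub_ne_zero.mpr hκx.symm
  rw [show (1 + κ / x) / (1 - κ / x) = (x + κ) / (x - κ) by field_simp,
    div_pow, div_pow, show (κ - x) ^ 2 = (x - κ) ^ 2 by ring]
  field_simp
  ring

theorem stmt_7_general (T γ ζ : ℝ) (hγ : 0 < γ)
    (θ0 : ℝ → ℝ)
    (hθ0 : ∀ s, θ0 s = (1 + ζ * Real.exp (2 * γ * (T - s))) /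
                       (1 - ζ * Real.exp (2 * γ * (T - s))))
    (Ψ0 : ℝ → ℝ → ℝ)
    (hΨ0 : ∀ t s, Ψ0 t s = Real.exp (-2 * γ * (s - t)) *
        ((ζ * Real.exp (2 * γ * T) - Real.exp (2 * γ * s)) /
         (ζ * Real.exp (2 * γ * T) - Real.exp (2 * γ * t))) ^ 2)
    (t : ℝ) (htT : t ≤ T)
    (hnd : ∀ s ∈ Set.Icc t T, ζ * Real.exp (2 * γ * T) ≠ Real.exp (2 * γ * s)) :
    ∫ s in t..T, s * (θ0 s) ^ 2 * Ψ0 t s =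
      (Real.exp (2 * γ * (t + T)) * (4 * γ ^ 2 * ζ * (T ^ 2 - t ^ 2)
          - ζ ^ 2 * (2 * γ * T + 1) + 2 * γ * T - 1)
        + Real.exp (4 * γ * t) * (1 - 2 * γ * t)
        + ζ ^ 2 * (2 * γ * t + 1) * Real.exp (4 * γ * T)) /
      (4 * γ ^ 2 * (Real.exp (2 * γ * t) - ζ * Real.exp (2 * γ * T)) ^ 2) := by
  set κ := ζ * exp (2 * γ * T)
  set c := exp (2 * γ * t) / (κ - exp (2 * γ * t)) ^ 2
  have hexp_sub (a b : ℝ) : exp (2 * γ * (a - b)) = exp (2 * γ * a) / exp (2 * γ * b) := by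
    rw [← exp_sub]; ring_nf
  have hintegrand : ∀ s ∈ uIcc t T, s * θ0 s ^ 2 * Ψ0 t s =
      c * (s * exp (2 * γ * s) + 2 * κ * s + κ ^ 2 * (s * exp (-(2 * γ) * s))) := by
    intro s hs
    rw [uIcc_of_le htT] at hs
    rw [hθ0, hΨ0, show -2 * γ * (s - t) = 2 * γ * (t - s) by ring, hexp_sub, hexp_sub,
      mul_div_assoc', mul_assoc, sq_div_mul_div_sq_eq (exp_ne_zero _) (hnd s hs),
      neg_mul, exp_neg]
    field_simp
    ring
  have hint {f : ℝ → ℝ} (hf : Continuous f) : IntervalIntegrable f volume t T :=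
    hf.intervalIntegrable t T
  rw [intervalIntegral.integral_congr hintegrand, intervalIntegral.integral_const_mul,
    intervalIntegral.integral_add (hint (by fun_prop)) (hint (by fun_prop)),
    intervalIntegral.integral_add (hint (by fun_prop)) (hint (by fun_prop)),
    intervalIntegral.integral_const_mul, intervalIntegral.integral_const_mul, integral_id,
    integral_mul_exp_mul (by positivity), integral_mul_exp_mul (by simp [hγ.ne'])]
  have hsq (a : ℝ) : exp (4 * γ * a) = exp (2 * γ * a) ^ 2 := by
    rw [← exp_nat_mul]; ring_nf
  have hκt : κ ≠ exp (2 * γ * t) := hnd t ⟨le_rfl, htT⟩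
  have hκt' : ζ * exp (2 * γ * T) - exp (2 * γ * t) ≠ 0 := sub_ne_zero.mpr hκt
  have htκ : exp (2 * γ * t) - ζ * exp (2 * γ * T) ≠ 0 := sub_ne_zero.mpr hκt.symm
  rw [show 2 * γ * (t + T) = 2 * γ * t + 2 * γ * T by ring, exp_add, hsq, hsq]
  simp only [c, κ, neg_mul, exp_neg]
  field_simp
  ring

theorem stmt_7 (T γ ζ : ℝ) (hT : 0 < T) (hγ : 0 < γ)
    (θ0 : ℝ → ℝ)
    (hθ0 : ∀ s, θ0 s = (1 + ζ * Real.exp (2 * γ * (T - s))) /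
                       (1 - ζ * Real.exp (2 * γ * (T - s))))
    (Ψ0 : ℝ → ℝ → ℝ)
    (hΨ0 : ∀ t s, Ψ0 t s = Real.exp (-2 * γ * (s - t)) *
        ((ζ * Real.exp (2 * γ * T) - Real.exp (2 * γ * s)) /
         (ζ * Real.exp (2 * γ * T) - Real.exp (2 * γ * t))) ^ 2)
    (t : ℝ) (htT : t ≤ T)
    (hnd : ∀ s ∈ Set.Icc t T, ζ * Real.exp (2 * γ * T) ≠ Real.exp (2 * γ * s)) :
    ∫ s in t..T, s * (θ0 s) ^ 2 * Ψ0 t s =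
      (Real.exp (2 * γ * (t + T)) * (4 * γ ^ 2 * ζ * (T ^ 2 - t ^ 2)
          - ζ ^ 2 * (2 * γ * T + 1) + 2 * γ * T - 1)
        + Real.exp (4 * γ * t) * (1 - 2 * γ * t)
        + ζ ^ 2 * (2 * γ * t + 1) * Real.exp (4 * γ * T)) /
      (4 * γ ^ 2 * (Real.exp (2 * γ * t) - ζ * Real.exp (2 * γ * T)) ^ 2) :=
  stmt_7_general T γ ζ hγ θ0 hθ0 Ψ0 hΨ0 t htT hnd
end

section
/- Let T > 0, γ > 0, ζ ∈ ℝ, and define θ0(s) := (1 + ζ·exp(2γ(T−s)))/(1 − ζ·exp(2γ(T−s))) and Ψ0(t,s) := exp(−2γ(s−t))·((ζ·exp(2γT) − exp(2γs))/(ζ·exp(2γT) − exp(2γt)))². Fix t ≤ T and assume ζ·exp(2γT) ≠ exp(2γs) for every s ∈ [t,T]. Then ∫_t^T θ0(s)²·Ψ0(t,s) ds = −[ exp(4γt) + exp(2γ(t+T))·(ζ² + 4γζ(t−T) − 1) − ζ²·exp(4γT) ] / (2γ·(exp(2γt) − ζ·exp(2γT))²). -/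
/-!
With `u = exp (2γs)`, `a = exp (2γt)` and `A = ζ exp (2γT)` one has `θ0 s = (u + A) / (u - A)` and
`Ψ0 t s = (a / u) ((A - u) / (A - a))²`, so the poles at `u = A` cancel and the integrand is
`a / (A - a)² · (u + 2A + A² / u)`, a combination of `exp (2γs)`, `1` and `exp (-2γs)` that integrates
in closed form.
-/

open Real Set MeasureTheory

lemma sq_div_mul_sq_div_eq (A a u : ℝ) (hu : u ≠ 0) (huA : u - A ≠ 0) (haA : A - a ≠ 0) :
    ((1 + A / u) / (1 - A / u)) ^ 2 * (a / u * ((A - u) / (A - a)) ^ 2) =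
      a / (A - a) ^ 2 * (u + 2 * A + A ^ 2 * u⁻¹) := by
  have h1 : 1 - A / u ≠ 0 := by rwa [one_sub_div hu, div_ne_zero_iff, and_iff_left hu]
  field_simp
  ring

lemma hasDerivAt_exp_add_linear_sub_exp_neg (k C D s : ℝ) (hk : k ≠ 0) :
    HasDerivAt (fun x => exp (k * x) / k + C * x - D * exp (-(k * x)) / k)
      (exp (k * s) + C + D * exp (-(k * s))) s := by
  have hlin : HasDerivAt (fun x => k * x) k s := by simpa using (hasDerivAt_id s).const_mul k
  have hneg : HasDerivAt (fun x => -(k * x)) (-k) s := hlin.neg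
  refine (((hlin.exp.div_const k).add ((hasDerivAt_id' s).const_mul C)).sub
    ((hneg.exp.const_mul D).div_const k)).congr_deriv ?_
  field_simp
  ring

lemma integral_exp_add_const_add_exp_neg (k C D a b : ℝ) (hk : k ≠ 0) :
    ∫ s in a..b, (exp (k * s) + C + D * exp (-(k * s))) =
      (exp (k * b) - exp (k * a)) / k + C * (b - a) - D * (exp (-(k * b)) - exp (-(k * a))) / k := by
  rw [intervalIntegral.integral_eq_sub_of_hasDerivAt
    (fun s _ => hasDerivAt_exp_add_linear_sub_exp_neg k C D s hk)
    (Continuous.intervalIntegrable (by fun_prop) a b)]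
  ring

theorem stmt_8_general (T γ ζ : ℝ) (hγ : 0 < γ)
    (θ0 : ℝ → ℝ)
    (hθ0 : ∀ s, θ0 s = (1 + ζ * Real.exp (2 * γ * (T - s))) /
                       (1 - ζ * Real.exp (2 * γ * (T - s))))
    (Ψ0 : ℝ → ℝ → ℝ)
    (hΨ0 : ∀ t s, Ψ0 t s = Real.exp (-2 * γ * (s - t)) *
        ((ζ * Real.exp (2 * γ * T) - Real.exp (2 * γ * s)) /
         (ζ * Real.exp (2 * γ * T) - Real.exp (2 * γ * t))) ^ 2)
    (t : ℝ) (htT : t ≤ T)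
    (hnd : ∀ s ∈ Set.Icc t T, ζ * Real.exp (2 * γ * T) ≠ Real.exp (2 * γ * s)) :
    ∫ s in t..T, (θ0 s) ^ 2 * Ψ0 t s =
      -((Real.exp (4 * γ * t)
          + Real.exp (2 * γ * (t + T)) * (ζ ^ 2 + 4 * γ * ζ * (t - T) - 1)
          - ζ ^ 2 * Real.exp (4 * γ * T)) /
        (2 * γ * (Real.exp (2 * γ * t) - ζ * Real.exp (2 * γ * T)) ^ 2)) := by
  set A := ζ * exp (2 * γ * T)
  have hexp_sub (x y : ℝ) : exp (2 * γ * (x - y)) = exp (2 * γ * x) / exp (2 * γ * y) := by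
    rw [mul_sub, exp_sub]
  have hAt : A - exp (2 * γ * t) ≠ 0 := sub_ne_zero.mpr (hnd t ⟨le_rfl, htT⟩)
  have hintegrand : EqOn (fun s => θ0 s ^ 2 * Ψ0 t s)
      (fun s => exp (2 * γ * t) / (A - exp (2 * γ * t)) ^ 2 *
        (exp (2 * γ * s) + 2 * A + A ^ 2 * exp (-(2 * γ * s)))) (uIcc t T) := by
    intro s hs
    rw [uIcc_of_le htT] at hs
    have hΨ : exp (-2 * γ * (s - t)) = exp (2 * γ * t) / exp (2 * γ * s) := by
      rw [← hexp_sub]; ring_nf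
    simp only [hθ0, hΨ0, hΨ, hexp_sub, ← mul_div_assoc, exp_neg]
    exact sq_div_mul_sq_div_eq A _ _ (exp_pos _).ne' (sub_ne_zero.mpr (hnd s hs).symm) hAt
  rw [intervalIntegral.integral_congr hintegrand, intervalIntegral.integral_const_mul,
    integral_exp_add_const_add_exp_neg _ _ _ _ _ (by positivity)]
  have hexp_add (x y : ℝ) : exp (2 * γ * (x + y)) = exp (2 * γ * x) * exp (2 * γ * y) := by
    rw [mul_add, exp_add]
  have hexp_two_mul (x : ℝ) : exp (4 * γ * x) = exp (2 * γ * x) ^ 2 := by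
    rw [sq, ← exp_add]; ring_nf
  simp only [hexp_add, hexp_two_mul, exp_neg, A]
  field_simp
  ring

theorem stmt_8 (T γ ζ : ℝ) (hT : 0 < T) (hγ : 0 < γ)
    (θ0 : ℝ → ℝ)
    (hθ0 : ∀ s, θ0 s = (1 + ζ * Real.exp (2 * γ * (T - s))) /
                       (1 - ζ * Real.exp (2 * γ * (T - s))))
    (Ψ0 : ℝ → ℝ → ℝ)
    (hΨ0 : ∀ t s, Ψ0 t s = Real.exp (-2 * γ * (s - t)) *
        ((ζ * Real.exp (2 * γ * T) - Real.exp (2 * γ * s)) /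
         (ζ * Real.exp (2 * γ * T) - Real.exp (2 * γ * t))) ^ 2)
    (t : ℝ) (htT : t ≤ T)
    (hnd : ∀ s ∈ Set.Icc t T, ζ * Real.exp (2 * γ * T) ≠ Real.exp (2 * γ * s)) :
    ∫ s in t..T, (θ0 s) ^ 2 * Ψ0 t s =
      -((Real.exp (4 * γ * t)
          + Real.exp (2 * γ * (t + T)) * (ζ ^ 2 + 4 * γ * ζ * (t - T) - 1)
          - ζ ^ 2 * Real.exp (4 * γ * T)) /
        (2 * γ * (Real.exp (2 * γ * t) - ζ * Real.exp (2 * γ * T)) ^ 2)) :=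
  stmt_8_general T γ ζ hγ θ0 hθ0 Ψ0 hΨ0 t htT hnd
end

section
/- Let T > 0, γ > 0, ζ ∈ ℝ, and define θ0(s) := (1 + ζ·exp(2γ(T−s)))/(1 − ζ·exp(2γ(T−s))) and Ψ0(t,s) := exp(−2γ(s−t))·((ζ·exp(2γT) − exp(2γs))/(ζ·exp(2γT) − exp(2γt)))². Fix t ≤ T and assume ζ·exp(2γT) ≠ exp(2γs) for every s ∈ [t,T]. Then ∫_t^T s·θ0(s)·Ψ0(t,s) ds = [ exp(4γt)·(1−2γt) − ζ²(2γt+1)·exp(4γT) + exp(2γ(t+T))·(ζ² + 2γ(ζ²+1)T − 1) ] / (4γ²·(exp(2γt) − ζ·exp(2γT))²). -/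
open Real Set MeasureTheory

/-!
With `a = ζ e^{2γT}` and `u = e^{2γs}` one has `θ0(s) = (u + a)/(u - a)` and
`Ψ0(t,s) = e^{2γt} (u - a)² / (u (e^{2γt} - a)²)`, so the simple pole of `θ0` is absorbed by the
double zero of `Ψ0` and the integrand collapses to `e^{2γt}/(a - e^{2γt})² · s (e^{2γs} - a² e^{-2γs})`,
which is integrated with the elementary primitive of `s e^{cs}`.
-/

theorem hasDerivAt_mul_exp_primitive {c : ℝ} (hc : c ≠ 0) (x : ℝ) :
    HasDerivAt (fun y => (y / c - 1 / c ^ 2) * exp (c * y)) (x * exp (c * x)) x := by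
  have hexp : HasDerivAt (fun y => exp (c * y)) (exp (c * x) * c) x := by
    simpa using ((hasDerivAt_id x).const_mul c).exp
  refine ((((hasDerivAt_id' x).div_const c).sub_const (1 / c ^ 2)).fun_mul hexp).congr_deriv ?_
  field_simp
  ring

theorem integral_mul_exp_sub_mul_exp_neg {c : ℝ} (hc : c ≠ 0) (b t T : ℝ) :
    ∫ s in t..T, (s * exp (c * s) - b * (s * exp (-c * s))) =
      ((T / c - 1 / c ^ 2) * exp (c * T) - b * ((T / -c - 1 / (-c) ^ 2) * exp (-c * T))) -
        ((t / c - 1 / c ^ 2) * exp (c * t) - b * ((t / -c - 1 / (-c) ^ 2) * exp (-c * t))) :=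
  intervalIntegral.integral_eq_sub_of_hasDerivAt
    (fun x _ => (hasDerivAt_mul_exp_primitive hc x).sub
      ((hasDerivAt_mul_exp_primitive (neg_ne_zero.mpr hc) x).const_mul b))
    (by apply Continuous.intervalIntegrable; fun_prop)

theorem div_mul_sq_div_eq {a c u : ℝ} (hu : u ≠ 0) (hua : u ≠ a) :
    (1 + a / u) / (1 - a / u) * (c / u * ((a - u) / (a - c)) ^ 2) =
      c / (a - c) ^ 2 * (u - a ^ 2 / u) := by
  have hua' : u - a ≠ 0 := sub_ne_zero.mpr hua
  have hau : a - u ≠ 0 := sub_ne_zero.mpr hua.symm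
  rw [one_add_div hu, one_sub_div hu, div_div_div_cancel_right₀ hu, div_pow, sub_div' hu]
  field_simp
  ring

theorem stmt_9_general (T γ ζ : ℝ) (hγ : 0 < γ)
    (θ0 : ℝ → ℝ)
    (hθ0 : ∀ s, θ0 s = (1 + ζ * Real.exp (2 * γ * (T - s))) /
                       (1 - ζ * Real.exp (2 * γ * (T - s))))
    (Ψ0 : ℝ → ℝ → ℝ)
    (hΨ0 : ∀ t s, Ψ0 t s = Real.exp (-2 * γ * (s - t)) *
        ((ζ * Real.exp (2 * γ * T) - Real.exp (2 * γ * s)) /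
         (ζ * Real.exp (2 * γ * T) - Real.exp (2 * γ * t))) ^ 2)
    (t : ℝ) (htT : t ≤ T)
    (hnd : ∀ s ∈ Set.Icc t T, ζ * Real.exp (2 * γ * T) ≠ Real.exp (2 * γ * s)) :
    ∫ s in t..T, s * θ0 s * Ψ0 t s =
      (Real.exp (4 * γ * t) * (1 - 2 * γ * t)
        - ζ ^ 2 * (2 * γ * t + 1) * Real.exp (4 * γ * T)
        + Real.exp (2 * γ * (t + T)) * (ζ ^ 2 + 2 * γ * (ζ ^ 2 + 1) * T - 1)) /
      (4 * γ ^ 2 * (Real.exp (2 * γ * t) - ζ * Real.exp (2 * γ * T)) ^ 2) := by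
  set a := ζ * exp (2 * γ * T)
  have hexp_sub (x y : ℝ) : exp (2 * γ * (x - y)) = exp (2 * γ * x) / exp (2 * γ * y) := by
    rw [mul_sub, exp_sub]
  have hintegrand : EqOn (fun s => s * θ0 s * Ψ0 t s)
      (fun s => exp (2 * γ * t) / (a - exp (2 * γ * t)) ^ 2 *
        (s * exp (2 * γ * s) - a ^ 2 * (s * exp (-(2 * γ) * s)))) (uIcc t T) := by
    intro s hs
    have hθ : θ0 s = (1 + a / exp (2 * γ * s)) / (1 - a / exp (2 * γ * s)) := by
      rw [hθ0, hexp_sub, mul_div_assoc]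
    have hΨ : Ψ0 t s = exp (2 * γ * t) / exp (2 * γ * s) *
        ((a - exp (2 * γ * s)) / (a - exp (2 * γ * t))) ^ 2 := by
      rw [hΨ0, ← hexp_sub]; ring_nf
    rw [uIcc_of_le htT] at hs
    dsimp only
    rw [mul_assoc, hθ, hΨ, div_mul_sq_div_eq (exp_pos _).ne' (hnd s hs).symm, neg_mul, exp_neg]
    ring
  rw [intervalIntegral.integral_congr hintegrand, intervalIntegral.integral_const_mul,
    integral_mul_exp_sub_mul_exp_neg (by positivity)]
  have hct : a - exp (2 * γ * t) ≠ 0 := sub_ne_zero.mpr (hnd t ⟨le_rfl, htT⟩)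
  have hu := (exp_pos (2 * γ * t)).ne'
  have hv := (exp_pos (2 * γ * T)).ne'
  rw [← neg_sub a, neg_sq, show 4 * γ * t = 2 * γ * t + 2 * γ * t by ring,
    show 4 * γ * T = 2 * γ * T + 2 * γ * T by ring, mul_add _ t T]
  simp only [a, neg_mul, exp_neg, exp_add] at hct ⊢
  field_simp
  ring

theorem stmt_9 (T γ ζ : ℝ) (hT : 0 < T) (hγ : 0 < γ)
    (θ0 : ℝ → ℝ)
    (hθ0 : ∀ s, θ0 s = (1 + ζ * Real.exp (2 * γ * (T - s))) /
                       (1 - ζ * Real.exp (2 * γ * (T - s))))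
    (Ψ0 : ℝ → ℝ → ℝ)
    (hΨ0 : ∀ t s, Ψ0 t s = Real.exp (-2 * γ * (s - t)) *
        ((ζ * Real.exp (2 * γ * T) - Real.exp (2 * γ * s)) /
         (ζ * Real.exp (2 * γ * T) - Real.exp (2 * γ * t))) ^ 2)
    (t : ℝ) (htT : t ≤ T)
    (hnd : ∀ s ∈ Set.Icc t T, ζ * Real.exp (2 * γ * T) ≠ Real.exp (2 * γ * s)) :
    ∫ s in t..T, s * θ0 s * Ψ0 t s =
      (Real.exp (4 * γ * t) * (1 - 2 * γ * t)
        - ζ ^ 2 * (2 * γ * t + 1) * Real.exp (4 * γ * T)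
        + Real.exp (2 * γ * (t + T)) * (ζ ^ 2 + 2 * γ * (ζ ^ 2 + 1) * T - 1)) /
      (4 * γ ^ 2 * (Real.exp (2 * γ * t) - ζ * Real.exp (2 * γ * T)) ^ 2) :=
  stmt_9_general T γ ζ hγ θ0 hθ0 Ψ0 hΨ0 t htT hnd
end

section
/- Let T > 0, γ > 0, ζ ∈ ℝ, and define θ0(s) := (1 + ζ·exp(2γ(T−s)))/(1 − ζ·exp(2γ(T−s))) and Ψ0(t,s) := exp(−2γ(s−t))·((ζ·exp(2γT) − exp(2γs))/(ζ·exp(2γT) − exp(2γt)))². Fix t ≤ T and assume ζ·exp(2γT) ≠ exp(2γs) for every s ∈ [t,T]. Then ∫_t^T θ0(s)·Ψ0(t,s) ds = −[ (exp(2γt) − exp(2γT))·(exp(2γt) − ζ²·exp(2γT)) ] / (2γ·(exp(2γt) − ζ·exp(2γT))²). -/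
/-! With `a = ζ e^{2γT}` and `x = e^{2γs}`, `θ0(s) = (x + a)/(x - a)` and the squared factor of
`Ψ0(t,s)` cancels the denominator, so `θ0(s) Ψ0(t,s) = c (e^{2γs} - a² e^{-2γs})` with `c` depending
only on `t`; this integrates in closed form. -/

open Real Set MeasureTheory

lemma hasDerivAt_exp_mul_add_mul_exp_neg (k b s : ℝ) :
    HasDerivAt (fun s => exp (k * s) + b * exp (-(k * s)))
      (k * (exp (k * s) - b * exp (-(k * s)))) s := by
  have h₁ : HasDerivAt (fun s => exp (k * s)) (exp (k * s) * k) s := by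
    simpa using ((hasDerivAt_id s).const_mul k).exp
  have h₂ : HasDerivAt (fun s => exp (-(k * s))) (exp (-(k * s)) * -k) s := by
    simpa using ((hasDerivAt_id s).const_mul k).neg.exp
  exact (h₁.add (h₂.const_mul b)).congr_deriv (by ring)

lemma integral_exp_mul_sub_mul_exp_neg {k : ℝ} (hk : k ≠ 0) (b u v : ℝ) :
    ∫ s in u..v, (exp (k * s) - b * exp (-(k * s))) =
      (exp (k * v) + b * exp (-(k * v)) - (exp (k * u) + b * exp (-(k * u)))) / k := by
  rw [eq_div_iff hk, mul_comm, ← intervalIntegral.integral_const_mul]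
  refine intervalIntegral.integral_eq_sub_of_hasDerivAt
    (fun s _ => hasDerivAt_exp_mul_add_mul_exp_neg k b s) ?_
  exact Continuous.intervalIntegrable (by fun_prop) u v

lemma one_add_div_div_one_sub_div_mul {a x y : ℝ} (hx : x ≠ 0) (hxa : x ≠ a) (hya : y ≠ a) :
    (1 + a / x) / (1 - a / x) * (y / x * ((a - x) / (a - y)) ^ 2) =
      y / (y - a) ^ 2 * (x - a ^ 2 / x) := by
  have hxa' : x - a ≠ 0 := sub_ne_zero.mpr hxa
  have hay : a - y ≠ 0 := sub_ne_zero.mpr hya.symm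
  have hya' : y - a ≠ 0 := sub_ne_zero.mpr hya
  field_simp
  ring

theorem stmt_10_general (T γ ζ : ℝ) (hγ : 0 < γ)
    (θ0 : ℝ → ℝ)
    (hθ0 : ∀ s, θ0 s = (1 + ζ * Real.exp (2 * γ * (T - s))) /
                       (1 - ζ * Real.exp (2 * γ * (T - s))))
    (Ψ0 : ℝ → ℝ → ℝ)
    (hΨ0 : ∀ t s, Ψ0 t s = Real.exp (-2 * γ * (s - t)) *
        ((ζ * Real.exp (2 * γ * T) - Real.exp (2 * γ * s)) /
         (ζ * Real.exp (2 * γ * T) - Real.exp (2 * γ * t))) ^ 2)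
    (t : ℝ) (htT : t ≤ T)
    (hnd : ∀ s ∈ Set.Icc t T, ζ * Real.exp (2 * γ * T) ≠ Real.exp (2 * γ * s)) :
    ∫ s in t..T, θ0 s * Ψ0 t s =
      -(((Real.exp (2 * γ * t) - Real.exp (2 * γ * T)) *
          (Real.exp (2 * γ * t) - ζ ^ 2 * Real.exp (2 * γ * T))) /
        (2 * γ * (Real.exp (2 * γ * t) - ζ * Real.exp (2 * γ * T)) ^ 2)) := by
  set a := ζ * exp (2 * γ * T)
  set c := exp (2 * γ * t) / (exp (2 * γ * t) - a) ^ 2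
  have hpoint : ∀ s ∈ uIcc t T,
      θ0 s * Ψ0 t s = c * (exp (2 * γ * s) - a ^ 2 * exp (-(2 * γ * s))) := by
    intro s hs
    rw [uIcc_of_le htT] at hs
    have hζ : ζ * exp (2 * γ * (T - s)) = a / exp (2 * γ * s) := by
      rw [mul_sub, exp_sub, mul_div_assoc]
    have hΨ : exp (-2 * γ * (s - t)) = exp (2 * γ * t) / exp (2 * γ * s) := by
      rw [← exp_sub]; ring_nf
    rw [hθ0, hΨ0, hζ, hΨ, one_add_div_div_one_sub_div_mul (exp_ne_zero _) (hnd s hs).symm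
      (hnd t ⟨le_rfl, htT⟩).symm, exp_neg, ← div_eq_mul_inv]
  rw [intervalIntegral.integral_congr hpoint, intervalIntegral.integral_const_mul,
    integral_exp_mul_sub_mul_exp_neg (by positivity)]
  have hta : exp (2 * γ * t) - a ≠ 0 := sub_ne_zero.mpr (hnd t ⟨le_rfl, htT⟩).symm
  simp only [c, a, exp_neg]
  field_simp
  ring

theorem stmt_10 (T γ ζ : ℝ) (hT : 0 < T) (hγ : 0 < γ)
    (θ0 : ℝ → ℝ)
    (hθ0 : ∀ s, θ0 s = (1 + ζ * Real.exp (2 * γ * (T - s))) /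
                       (1 - ζ * Real.exp (2 * γ * (T - s))))
    (Ψ0 : ℝ → ℝ → ℝ)
    (hΨ0 : ∀ t s, Ψ0 t s = Real.exp (-2 * γ * (s - t)) *
        ((ζ * Real.exp (2 * γ * T) - Real.exp (2 * γ * s)) /
         (ζ * Real.exp (2 * γ * T) - Real.exp (2 * γ * t))) ^ 2)
    (t : ℝ) (htT : t ≤ T)
    (hnd : ∀ s ∈ Set.Icc t T, ζ * Real.exp (2 * γ * T) ≠ Real.exp (2 * γ * s)) :
    ∫ s in t..T, θ0 s * Ψ0 t s =
      -(((Real.exp (2 * γ * t) - Real.exp (2 * γ * T)) *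
          (Real.exp (2 * γ * t) - ζ ^ 2 * Real.exp (2 * γ * T))) /
        (2 * γ * (Real.exp (2 * γ * t) - ζ * Real.exp (2 * γ * T)) ^ 2)) :=
  stmt_10_general T γ ζ hγ θ0 hθ0 Ψ0 hΨ0 t htT hnd
end

section
/- Let T > 0, f0 > 0, φ > 0, g0 ∈ ℝ and fix t ∈ [0,T) with t < T. Set γ := √(φ/f0); for κ ∈ ℝ with κ − g0/2 − √(φ·f0) ≠ 0 define ζ(κ) := (κ − g0/2 + √(φ·f0))/(κ − g0/2 − √(φ·f0)) and h0^{(κ)}(t) := −g0/2 + √(φ·f0)·(1 + ζ(κ)·exp(2γ(T−t)))/(1 − ζ(κ)·exp(2γ(T−t))). Then the limit as κ → +∞ of h0^{(κ)}(t) exists and equals −g0/2 − f0·γ·coth(γ(T−t)), where coth(x) := (exp(x)+exp(−x))/(exp(x)−exp(−x)). -/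
open Real Filter Topology

/-!
As `κ → ∞` the ratio `ζ(κ)` tends to `1`, and `z ↦ (1 + z E) / (1 - z E)` is continuous at
`z = 1` because `E = exp (2 γ (T - t)) > 1`. The limit is therefore
`-g0/2 + √(φ f0) (1 + E) / (1 - E)`, which is the claimed value since `√(φ f0) = f0 γ` and
`(E + 1) / (E - 1) = coth (γ (T - t))`.
-/

theorem tendsto_add_div_add_atTop_nhds_one (a c : ℝ) :
    Tendsto (fun x : ℝ => (x + a) / (x + c)) atTop (𝓝 1) := by
  have hinv : Tendsto (fun x : ℝ => (x + c)⁻¹) atTop (𝓝 0) :=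
    (tendsto_atTop_add_const_right atTop c tendsto_id).inv_tendsto_atTop
  have hlim : Tendsto (fun x : ℝ => 1 + (a - c) * (x + c)⁻¹) atTop (𝓝 1) := by
    simpa using tendsto_const_nhds.add (hinv.const_mul (a - c))
  refine hlim.congr' ?_
  filter_upwards [eventually_gt_atTop (-c)] with x hx
  have hne : x + c ≠ 0 := by linarith
  field_simp
  ring

theorem Filter.Tendsto.one_add_mul_div_one_sub_mul {α : Type*} {l : Filter α} {ζ : α → ℝ}
    {z : ℝ} (hζ : Tendsto ζ l (𝓝 z)) {E : ℝ} (hden : 1 - z * E ≠ 0) :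
    Tendsto (fun κ => (1 + ζ κ * E) / (1 - ζ κ * E)) l (𝓝 ((1 + z * E) / (1 - z * E))) :=
  (tendsto_const_nhds.add (hζ.mul_const E)).div (tendsto_const_nhds.sub (hζ.mul_const E)) hden

theorem exp_add_exp_neg_div_exp_sub_exp_neg (x : ℝ) :
    (exp x + exp (-x)) / (exp x - exp (-x)) = (exp (2 * x) + 1) / (exp (2 * x) - 1) := by
  have hx : exp x ≠ 0 := (exp_pos x).ne'
  rw [← mul_div_mul_right _ _ hx, two_mul, exp_add, exp_neg]
  congr 1 <;> field_simp

theorem sqrt_mul_eq_mul_sqrt_div {f : ℝ} (hf : 0 ≤ f) (φ : ℝ) :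
    √(φ * f) = f * √(φ / f) := by
  rcases hf.eq_or_lt with rfl | hf
  · simp
  rw [← sqrt_sq hf.le, ← sqrt_mul (sq_nonneg f), sqrt_sq hf.le]
  congr 1
  field_simp

theorem stmt_12_general (T f0 φ g0 : ℝ) (hf0 : 0 < f0) (hφ : 0 < φ)
    (t : ℝ) (ht : t ∈ Set.Ico (0 : ℝ) T)
    (γ : ℝ) (hγ : γ = Real.sqrt (φ / f0))
    (ζ : ℝ → ℝ)
    (hζ : ∀ κ, κ - g0 / 2 - Real.sqrt (φ * f0) ≠ 0 →
        ζ κ = (κ - g0 / 2 + Real.sqrt (φ * f0)) / (κ - g0 / 2 - Real.sqrt (φ * f0)))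
    (h0 : ℝ → ℝ)
    (hh0 : ∀ κ, h0 κ = -g0 / 2 + Real.sqrt (φ * f0) *
        ((1 + ζ κ * Real.exp (2 * γ * (T - t))) /
         (1 - ζ κ * Real.exp (2 * γ * (T - t)))))
    (coth : ℝ → ℝ)
    (hcoth : ∀ x, coth x = (Real.exp x + Real.exp (-x)) / (Real.exp x - Real.exp (-x))) :
    Filter.Tendsto h0 Filter.atTop
      (𝓝 (-g0 / 2 - f0 * γ * coth (γ * (T - t)))) := by
  set b := √(φ * f0)
  set E := exp (2 * γ * (T - t))
  have hγpos : 0 < γ := hγ ▸ sqrt_pos.mpr (div_pos hφ hf0)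
  have hE : 1 - 1 * E ≠ 0 := by
    rw [one_mul, sub_ne_zero, ne_comm, Ne, exp_eq_one_iff]
    exact (mul_pos (mul_pos two_pos hγpos) (sub_pos.mpr ht.2)).ne'
  have hζ1 : Tendsto ζ atTop (𝓝 1) := by
    refine (tendsto_add_div_add_atTop_nhds_one (-g0 / 2 + b) (-g0 / 2 - b)).congr' ?_
    filter_upwards [eventually_gt_atTop (g0 / 2 + b)] with κ hκ
    rw [hζ κ (by linarith)]
    ring_nf
  have hlim : Tendsto h0 atTop (𝓝 (-g0 / 2 + b * ((1 + 1 * E) / (1 - 1 * E)))) :=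
    (tendsto_const_nhds.add ((hζ1.one_add_mul_div_one_sub_mul hE).const_mul b)).congr
      fun κ => (hh0 κ).symm
  have hb : b = f0 * γ := hγ ▸ sqrt_mul_eq_mul_sqrt_div hf0.le φ
  convert hlim using 2
  rw [hcoth, exp_add_exp_neg_div_exp_sub_exp_neg, ← mul_assoc, ← hb, one_mul, ← neg_sub E 1,
    div_neg, add_comm 1 E]
  ring

theorem stmt_12 (T f0 φ g0 : ℝ) (hT : 0 < T) (hf0 : 0 < f0) (hφ : 0 < φ)
    (t : ℝ) (ht : t ∈ Set.Ico (0 : ℝ) T)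
    (γ : ℝ) (hγ : γ = Real.sqrt (φ / f0))
    (ζ : ℝ → ℝ)
    (hζ : ∀ κ, κ - g0 / 2 - Real.sqrt (φ * f0) ≠ 0 →
        ζ κ = (κ - g0 / 2 + Real.sqrt (φ * f0)) / (κ - g0 / 2 - Real.sqrt (φ * f0)))
    (h0 : ℝ → ℝ)
    (hh0 : ∀ κ, h0 κ = -g0 / 2 + Real.sqrt (φ * f0) *
        ((1 + ζ κ * Real.exp (2 * γ * (T - t))) /
         (1 - ζ κ * Real.exp (2 * γ * (T - t)))))
    (coth : ℝ → ℝ)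
    (hcoth : ∀ x, coth x = (Real.exp x + Real.exp (-x)) / (Real.exp x - Real.exp (-x))) :
    Filter.Tendsto h0 Filter.atTop
      (𝓝 (-g0 / 2 - f0 * γ * coth (γ * (T - t)))) :=
  stmt_12_general T f0 φ g0 hf0 hφ t ht γ hγ ζ hζ h0 hh0 coth hcoth
end

section
/- Let T > 0, σ ∈ ℝ, φ ∈ ℝ, ρ ∈ ℝ, and let f, g, μ, η, ω, ψ : ℝ → ℝ be functions. Let h : ℝ × ℝ × ℝ → ℝ be a function of (t,a,b) that is twice continuously differentiable in a neighborhood of a point (t,a,b) with f(a) > 0, and suppose h satisfies at (t,a,b) the transformed HJB equation: ∂_t h + (1/2)ω(a)²·∂_a²h + ρ·ω(a)ψ(b)·∂_a∂_b h + (1/2)ψ(b)²·∂_b²h + μ(a)·∂_a h + η(b)·∂_b h + h²/f(a) + g(b)·h/f(a) + g(b)²/(4f(a)) − φ = 0. Define H(t,x,s,q,a,b) := x + q·s + q²·h(t,a,b). Then for every (x,s,q) ∈ ℝ³, H satisfies the Hamilton–Jacobi–Bellman equation at (t,x,s,q,a,b): ∂_t H + (1/2)σ²·∂_s²H + (1/2)ω(a)²·∂_a²H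 + ρ·ω(a)ψ(b)·∂_a∂_b H + (1/2)ψ(b)²·∂_b²H + μ(a)·∂_a H + η(b)·∂_b H + sup_{ν ∈ ℝ} ( −g(b)·ν·∂_s H − ν·∂_q H + ν·(s − f(a)·ν)·∂_x H − φ·q² ) = 0, and the supremum is attained at ν* := −((g(b) + 2h(t,a,b))/(2f(a)))·q. -/
open Real

theorem stmt_18 (T σ φ ρ : ℝ) (hT : 0 < T)
    (f g μ η ω ψ : ℝ → ℝ)
    (h : ℝ → ℝ → ℝ → ℝ)
    (t a b : ℝ) (hfa : 0 < f a)
    (hsmooth : ContDiffAt ℝ 2 (fun p : ℝ × ℝ × ℝ => h p.1 p.2.1 p.2.2) (t, a, b))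
    (hHJB : deriv (fun τ => h τ a b) t
        + (1 / 2) * (ω a) ^ 2 * deriv (fun x => deriv (fun x' => h t x' b) x) a
        + ρ * ω a * ψ b * deriv (fun x => deriv (fun y => h t x y) b) a
        + (1 / 2) * (ψ b) ^ 2 * deriv (fun y => deriv (fun y' => h t a y') y) b
        + μ a * deriv (fun x => h t x b) a
        + η b * deriv (fun y => h t a y) b
        + (h t a b) ^ 2 / f a + g b * h t a b / f a + (g b) ^ 2 / (4 * f a) - φ = 0)
    (H : ℝ → ℝ → ℝ → ℝ → ℝ → ℝ → ℝ)
    (hH : ∀ t' x s q a' b', H t' x s q a' b' = x + q * s + q ^ 2 * h t' a' b') :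
    ∀ x s q : ℝ,
      (deriv (fun τ => H τ x s q a b) t
        + (1 / 2) * σ ^ 2 * deriv (fun s' => deriv (fun s'' => H t x s'' q a b) s') s
        + (1 / 2) * (ω a) ^ 2 * deriv (fun a' => deriv (fun a'' => H t x s q a'' b) a') a
        + ρ * ω a * ψ b * deriv (fun a' => deriv (fun b' => H t x s q a' b') b) a
        + (1 / 2) * (ψ b) ^ 2 * deriv (fun b' => deriv (fun b'' => H t x s q a b'') b') b
        + μ a * deriv (fun a' => H t x s q a' b) a
        + η b * deriv (fun b' => H t x s q a b') b
        + (⨆ ν : ℝ,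
            (-(g b) * ν * deriv (fun s' => H t x s' q a b) s
              - ν * deriv (fun q' => H t x s q' a b) q
              + ν * (s - f a * ν) * deriv (fun x' => H t x' s q a b) x
              - φ * q ^ 2)) = 0)
      ∧ (-(g b) * (-((g b + 2 * h t a b) / (2 * f a)) * q) * deriv (fun s' => H t x s' q a b) s
          - (-((g b + 2 * h t a b) / (2 * f a)) * q) * deriv (fun q' => H t x s q' a b) q
          + (-((g b + 2 * h t a b) / (2 * f a)) * q) *
              (s - f a * (-((g b + 2 * h t a b) / (2 * f a)) * q)) *
              deriv (fun x' => H t x' s q a b) x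
          - φ * q ^ 2)
        = (⨆ ν : ℝ,
            (-(g b) * ν * deriv (fun s' => H t x s' q a b) s
              - ν * deriv (fun q' => H t x s q' a b) q
              + ν * (s - f a * ν) * deriv (fun x' => H t x' s q a b) x
              - φ * q ^ 2)) := by
  intro x s q
  have hfa' : f a ≠ 0 := ne_of_gt hfa
  simp only [hH]
  -- first derivatives
  have Ds : ∀ s' : ℝ, deriv (fun s'' : ℝ => x + q * s'' + q ^ 2 * h t a b) s' = q := by
    intro s'
    have := ((((hasDerivAt_id s').const_mul q).const_add x).add_const (q ^ 2 * h t a b)).deriv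
    simpa using this
  have Dss : deriv (fun s' : ℝ =>
      deriv (fun s'' : ℝ => x + q * s'' + q ^ 2 * h t a b) s') s = 0 := by
    have : (fun s' : ℝ => deriv (fun s'' : ℝ => x + q * s'' + q ^ 2 * h t a b) s')
        = fun _ => q := funext fun s' => Ds s'
    rw [this, deriv_const]
  have Dq : deriv (fun q' : ℝ => x + q' * s + q' ^ 2 * h t a b) q
      = s + 2 * q * h t a b := by
    have h1 : HasDerivAt (fun q' : ℝ => x + q' * s) s q := by
      simpa using ((hasDerivAt_id q).mul_const s).const_add x
    have h2 : HasDerivAt (fun q' : ℝ => q' ^ 2 * h t a b) (2 * q * h t a b) q := by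
      simpa using (hasDerivAt_pow 2 q).mul_const (h t a b)
    exact (h1.add h2).deriv
  have Dx : deriv (fun x' : ℝ => x' + q * s + q ^ 2 * h t a b) x = 1 := by
    have : HasDerivAt (fun x' : ℝ => x' + q * s + q ^ 2 * h t a b) 1 x := by
      simpa using ((hasDerivAt_id x).add_const (q * s)).add_const (q ^ 2 * h t a b)
    exact this.deriv
  have Dt : deriv (fun τ => x + q * s + q ^ 2 * h τ a b) t
      = q ^ 2 * deriv (fun τ => h τ a b) t := by
    simp [deriv_const_add, deriv_const_mul_field]
  have Da : deriv (fun a' => x + q * s + q ^ 2 * h t a' b) a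
      = q ^ 2 * deriv (fun a' => h t a' b) a := by
    simp [deriv_const_add, deriv_const_mul_field]
  have Db : deriv (fun b' => x + q * s + q ^ 2 * h t a b') b
      = q ^ 2 * deriv (fun b' => h t a b') b := by
    simp [deriv_const_add, deriv_const_mul_field]
  have Daa : deriv (fun a' => deriv (fun a'' => x + q * s + q ^ 2 * h t a'' b) a') a
      = q ^ 2 * deriv (fun a' => deriv (fun a'' => h t a'' b) a') a := by
    have : (fun a' => deriv (fun a'' => x + q * s + q ^ 2 * h t a'' b) a')
        = fun a' => q ^ 2 * deriv (fun a'' => h t a'' b) a' := by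
      funext a'
      simp [deriv_const_add, deriv_const_mul_field]
    rw [this]
    simp [deriv_const_add, deriv_const_mul_field]
  have Dbb : deriv (fun b' => deriv (fun b'' => x + q * s + q ^ 2 * h t a b'') b') b
      = q ^ 2 * deriv (fun b' => deriv (fun b'' => h t a b'') b') b := by
    have : (fun b' => deriv (fun b'' => x + q * s + q ^ 2 * h t a b'') b')
        = fun b' => q ^ 2 * deriv (fun b'' => h t a b'') b' := by
      funext b'
      simp [deriv_const_add, deriv_const_mul_field]
    rw [this]
    simp [deriv_const_add, deriv_const_mul_field]
  have Dab : deriv (fun a' => deriv (fun b' => x + q * s + q ^ 2 * h t a' b') b) a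
      = q ^ 2 * deriv (fun a' => deriv (fun b' => h t a' b') b) a := by
    have : (fun a' => deriv (fun b' => x + q * s + q ^ 2 * h t a' b') b)
        = fun a' => q ^ 2 * deriv (fun b' => h t a' b') b := by
      funext a'
      simp [deriv_const_add, deriv_const_mul_field]
    rw [this]
    simp [deriv_const_add, deriv_const_mul_field]
  rw [Dss, Dq, Dx, Dt, Da, Db, Daa, Dbb, Dab]
  simp only [Ds s]
  -- the supremum
  set k : ℝ := g b + 2 * h t a b with hk
  set ν₀ : ℝ := -(k / (2 * f a)) * q with hν₀
  set F : ℝ → ℝ := fun ν =>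
    -(g b) * ν * q - ν * (s + 2 * q * h t a b) + ν * (s - f a * ν) * 1 - φ * q ^ 2
    with hF
  have hmax : ∀ ν : ℝ, F ν ≤ F ν₀ := by
    intro ν
    have key : F ν₀ - F ν = f a * (ν + q * k / (2 * f a)) ^ 2 := by
      simp only [hF, hν₀, hk]
      field_simp
      ring
    rw [← sub_nonneg, key]
    exact mul_nonneg hfa.le (sq_nonneg _)
  have hbdd : BddAbove (Set.range F) := ⟨F ν₀, by rintro _ ⟨ν, rfl⟩; exact hmax ν⟩
  have hsup : F ν₀ = ⨆ ν, F ν := le_antisymm (le_ciSup hbdd ν₀) (ciSup_le hmax)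
  constructor
  · rw [← hsup]
    have hFν₀ : F ν₀ = q ^ 2 * k ^ 2 / (4 * f a) - φ * q ^ 2 := by
      simp only [hF, hν₀]
      field_simp
      ring
    rw [hFν₀, hk]
    have expand : q ^ 2 * (g b + 2 * h t a b) ^ 2 / (4 * f a)
        = q ^ 2 * ((h t a b) ^ 2 / f a + g b * h t a b / f a + (g b) ^ 2 / (4 * f a)) := by
      field_simp
      ring
    rw [expand]
    linear_combination q ^ 2 * hHJB
  · exact hsup
end

section
/- Let T > 0, fa > 0, and let fa′, gb′, μ0, η0, ā, b̄, a, b ∈ ℝ, and fix t ∈ [0,T) with t < T. For φ > 0 set γ(φ) := √(φ/fa) and define S(φ) := c1(φ)·I1L(φ) + c2(φ)·I2L(φ) + c3(φ)·I3L(φ) + c4(φ)·I4L(φ), where c1(φ) := −γ(φ)²·fa′·μ0, c2(φ) := −γ(φ)²·fa′·(a − ā − t·μ0), c3(φ) := γ(φ)·gb′·η0, c4(φ) := γ(φ)·gb′·(b − b̄ − t·η0), and, writing γ := γ(φ), I1L(φ) := [ exp(2γ(t+T))·(4γ²(T²−t²) − 2) + exp(4γt)·(1−2γt) + (2γt+1)·exp(4γT)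 ] / (4γ²·(exp(2γt) − exp(2γT))²), I2L(φ) := ( −exp(4γt) − 4γ(t−T)·exp(2γ(t+T)) + exp(4γT) ) / (2γ·(exp(2γt) − exp(2γT))²), I3L(φ) := [ exp(4γt)·(1−2γt) + 4γT·exp(2γ(t+T)) − (2γt+1)·exp(4γT) ] / (4γ²·(exp(2γt) − exp(2γT))²), and I4L(φ) := −1/(2γ). Then the limit of S(φ) as φ → 0⁺ exists and equals −( fa′/(2(T−t)) )·( 2(a − ā) + μ0·(T−t) ) − ( gb′/6 )·( 3(b − b̄) + η0·(T−t) ). -/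
/-!
Put `x = (T - t) γ`. Factoring `exp (γ (t + T))` out of every exponential turns `γ² I1L`,
`γ² I2L` and `γ I3L` into polynomials in `cosh x`, `x / sinh x` and `(sinh 2x - 2x) / (2x)³`
(for `I3L` the terms of order `1/γ` cancel because `T = t + x / γ`). As `γ → 0⁺` these three
quantities tend to `1`, `1` and `1/6`, the last by L'Hôpital's rule, while `γ I4L = -1/2`.
-/
open Real Filter Topology Set

noncomputable def I1L (t T γ : ℝ) : ℝ :=
  (exp (2 * γ * (t + T)) * (4 * γ ^ 2 * (T ^ 2 - t ^ 2) - 2)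
      + exp (4 * γ * t) * (1 - 2 * γ * t) + (2 * γ * t + 1) * exp (4 * γ * T)) /
    (4 * γ ^ 2 * (exp (2 * γ * t) - exp (2 * γ * T)) ^ 2)

noncomputable def I2L (t T γ : ℝ) : ℝ :=
  (-exp (4 * γ * t) - 4 * γ * (t - T) * exp (2 * γ * (t + T)) + exp (4 * γ * T)) /
    (2 * γ * (exp (2 * γ * t) - exp (2 * γ * T)) ^ 2)

noncomputable def I3L (t T γ : ℝ) : ℝ :=
  (exp (4 * γ * t) * (1 - 2 * γ * t) + 4 * γ * T * exp (2 * γ * (t + T))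
      - (2 * γ * t + 1) * exp (4 * γ * T)) /
    (4 * γ ^ 2 * (exp (2 * γ * t) - exp (2 * γ * T)) ^ 2)

theorem tendsto_const_mul_nhdsNE_zero {c : ℝ} (hc : c ≠ 0) :
    Tendsto (fun x => c * x) (𝓝[≠] 0) (𝓝[≠] 0) :=
  tendsto_nhdsWithin_of_tendsto_nhds_of_eventually_within _
    ((continuous_const_mul c).tendsto' 0 0 (mul_zero c) |>.mono_left nhdsWithin_le_nhds)
    (eventually_nhdsWithin_of_forall fun _ hx => mul_ne_zero hc hx)

theorem tendsto_sqrt_div_nhdsGT_zero {c : ℝ} (hc : 0 < c) :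
    Tendsto (fun φ => √(φ / c)) (𝓝[>] 0) (𝓝[>] 0) :=
  tendsto_nhdsWithin_of_tendsto_nhds_of_eventually_within _
    (((by fun_prop : Continuous fun φ => √(φ / c)).tendsto' 0 0 (by simp)).mono_left
      nhdsWithin_le_nhds)
    (eventually_nhdsWithin_of_forall fun _ hφ => sqrt_pos.mpr (div_pos hφ hc))

theorem tendsto_sinh_div_self : Tendsto (fun x => sinh x / x) (𝓝[≠] 0) (𝓝 1) := by
  have h := hasDerivAt_iff_tendsto_slope.mp (hasDerivAt_sinh 0)
  simp only [cosh_zero] at h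
  exact h.congr fun x => by simp [slope_def_field]

theorem tendsto_self_div_sinh : Tendsto (fun x => x / sinh x) (𝓝[≠] 0) (𝓝 1) := by
  simpa using tendsto_sinh_div_self.inv₀ one_ne_zero

theorem cosh_sub_one_eq (x : ℝ) : cosh x - 1 = 2 * sinh (2⁻¹ * x) ^ 2 := by
  conv_lhs => rw [← mul_inv_cancel_left₀ (two_ne_zero' ℝ) x, cosh_two_mul, cosh_sq]
  ring

theorem tendsto_cosh_sub_one_div_sq :
    Tendsto (fun x => (cosh x - 1) / x ^ 2) (𝓝[≠] 0) (𝓝 (1 / 2)) := by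
  have h := ((tendsto_sinh_div_self.comp (tendsto_const_mul_nhdsNE_zero (inv_ne_zero
    (two_ne_zero' ℝ)))).pow 2).div_const 2
  refine (h.congr fun x => ?_).trans (by norm_num)
  simp only [Function.comp_apply, cosh_sub_one_eq]
  ring

theorem tendsto_sinh_sub_self_div_pow_three :
    Tendsto (fun x => (sinh x - x) / x ^ 3) (𝓝[≠] 0) (𝓝 (1 / 6)) := by
  have hdiv : Tendsto (fun x => (cosh x - 1) / (3 * x ^ 2)) (𝓝[≠] 0) (𝓝 (1 / 6)) := by
    refine ((tendsto_cosh_sub_one_div_sq.div_const 3).congr fun x => ?_).trans (by norm_num)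
    ring
  refine HasDerivAt.lhopital_zero_nhdsNE (f' := fun x => cosh x - 1) (g' := fun x => 3 * x ^ 2)
    (.of_forall fun x => (hasDerivAt_sinh x).sub (hasDerivAt_id x))
    (.of_forall fun x => by simpa using hasDerivAt_pow 3 x)
    (eventually_nhdsWithin_of_forall fun x hx => by simpa using hx) ?_ ?_ hdiv
  · exact tendsto_nhdsWithin_of_tendsto_nhds
      ((by fun_prop : Continuous fun x => sinh x - x).tendsto' 0 0 (by simp))
  · exact tendsto_nhdsWithin_of_tendsto_nhds (by simpa using (continuous_pow 3).tendsto (0:ℝ))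

theorem exists_exp_decomposition {γ t T : ℝ} (hγ : 0 < γ) (htT : t < T) :
    ∃ E Q : ℝ, 0 < E ∧ 1 < Q ∧
      exp (2 * γ * t) = E * Q⁻¹ ∧ exp (2 * γ * T) = E * Q ∧
      exp (4 * γ * t) = (E * Q⁻¹) ^ 2 ∧ exp (4 * γ * T) = (E * Q) ^ 2 ∧
      exp (2 * γ * (t + T)) = E ^ 2 ∧
      sinh ((T - t) * γ) = (Q - Q⁻¹) / 2 ∧ cosh ((T - t) * γ) = (Q + Q⁻¹) / 2 := by
  refine ⟨exp (γ * (t + T)), exp ((T - t) * γ), exp_pos _,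
    one_lt_exp_iff.mpr (mul_pos (sub_pos.mpr htT) hγ),
    ?_, ?_, ?_, ?_, ?_, by rw [sinh_eq, exp_neg], by rw [cosh_eq, exp_neg]⟩ <;>
  simp only [← exp_neg, ← exp_add, ← exp_nat_mul] <;> congr 1 <;> push_cast <;> ring

theorem sq_mul_I1L_eq {t T γ : ℝ} (hγ : 0 < γ) (htT : t < T) :
    γ ^ 2 * I1L t T γ =
      (1 + 2 * t / (T - t) * cosh ((T - t) * γ) * ((T - t) * γ / sinh ((T - t) * γ))
        + (T + t) / (T - t) * ((T - t) * γ / sinh ((T - t) * γ)) ^ 2) / 4 := by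
  obtain ⟨E, Q, hE, hQ, e1, e2, e3, e4, e5, hsinh, hcosh⟩ := exists_exp_decomposition hγ htT
  have hs : T - t ≠ 0 := (sub_pos.mpr htT).ne'
  have hQ1 : Q ^ 2 - 1 ≠ 0 := by nlinarith
  have hQ2 : 1 - Q ^ 2 ≠ 0 := by nlinarith
  rw [I1L, e1, e2, e3, e4, e5, hsinh, hcosh]
  field_simp
  ring

theorem sq_mul_I2L_eq {t T γ : ℝ} (hγ : 0 < γ) (htT : t < T) :
    γ ^ 2 * I2L t T γ = (cosh ((T - t) * γ) * ((T - t) * γ / sinh ((T - t) * γ))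
      + ((T - t) * γ / sinh ((T - t) * γ)) ^ 2) / (2 * (T - t)) := by
  obtain ⟨E, Q, hE, hQ, e1, e2, e3, e4, e5, hsinh, hcosh⟩ := exists_exp_decomposition hγ htT
  have hs : T - t ≠ 0 := (sub_pos.mpr htT).ne'
  have hQ1 : Q ^ 2 - 1 ≠ 0 := by nlinarith
  have hQ2 : 1 - Q ^ 2 ≠ 0 := by nlinarith
  rw [I2L, e1, e2, e3, e4, e5, hsinh, hcosh]
  field_simp
  ring

theorem mul_I3L_eq {t T γ : ℝ} (hγ : 0 < γ) (htT : t < T) :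
    γ * I3L t T γ =
      -(T - t) * ((sinh (2 * ((T - t) * γ)) - 2 * ((T - t) * γ)) / (2 * ((T - t) * γ)) ^ 3)
        * ((T - t) * γ / sinh ((T - t) * γ)) ^ 2 - t / 2 := by
  obtain ⟨E, Q, hE, hQ, e1, e2, e3, e4, e5, hsinh, hcosh⟩ := exists_exp_decomposition hγ htT
  have hs : T - t ≠ 0 := (sub_pos.mpr htT).ne'
  have hQ1 : Q ^ 2 - 1 ≠ 0 := by nlinarith
  have hQ2 : 1 - Q ^ 2 ≠ 0 := by nlinarith
  rw [I3L, e1, e2, e3, e4, e5, sinh_two_mul, hsinh, hcosh]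
  field_simp
  ring

section Limits

variable {t T : ℝ}

theorem tendsto_mul_self_div_sinh_mul {s : ℝ} (hs : s ≠ 0) :
    Tendsto (fun γ => s * γ / sinh (s * γ)) (𝓝[>] 0) (𝓝 1) :=
  tendsto_self_div_sinh.comp ((tendsto_const_mul_nhdsNE_zero hs).mono_left (nhdsGT_le_nhdsNE 0))

theorem tendsto_cosh_mul (s : ℝ) : Tendsto (fun γ => cosh (s * γ)) (𝓝[>] 0) (𝓝 1) :=
  ((by fun_prop : Continuous fun γ => cosh (s * γ)).tendsto' 0 1 (by simp)).mono_left
    nhdsWithin_le_nhds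

theorem tendsto_sq_mul_I1L (htT : t < T) :
    Tendsto (fun γ => γ ^ 2 * I1L t T γ) (𝓝[>] 0) (𝓝 ((T + t) / (2 * (T - t)))) := by
  have hs : T - t ≠ 0 := (sub_pos.mpr htT).ne'
  have hr := tendsto_mul_self_div_sinh_mul hs
  have h := ((((tendsto_cosh_mul (T - t)).const_mul (2 * t / (T - t))).mul hr).const_add 1).add
    ((hr.pow 2).const_mul ((T + t) / (T - t))) |>.div_const 4
  have hlim : (1 + 2 * t / (T - t) * 1 * 1 + (T + t) / (T - t) * 1 ^ 2) / 4
      = (T + t) / (2 * (T - t)) := by field_simp; ring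
  rw [hlim] at h
  exact h.congr' (eventually_nhdsWithin_of_forall fun γ hγ => (sq_mul_I1L_eq hγ htT).symm)

theorem tendsto_sq_mul_I2L (htT : t < T) :
    Tendsto (fun γ => γ ^ 2 * I2L t T γ) (𝓝[>] 0) (𝓝 (1 / (T - t))) := by
  have hs : T - t ≠ 0 := (sub_pos.mpr htT).ne'
  have hr := tendsto_mul_self_div_sinh_mul hs
  have h := (((tendsto_cosh_mul (T - t)).mul hr).add (hr.pow 2)).div_const (2 * (T - t))
  have hlim : (1 * 1 + 1 ^ 2) / (2 * (T - t)) = 1 / (T - t) := by field_simp; ring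
  rw [hlim] at h
  exact h.congr' (eventually_nhdsWithin_of_forall fun γ hγ => (sq_mul_I2L_eq hγ htT).symm)

theorem tendsto_mul_I3L (htT : t < T) :
    Tendsto (fun γ => γ * I3L t T γ) (𝓝[>] 0) (𝓝 (-(T + 2 * t) / 6)) := by
  have hs : T - t ≠ 0 := (sub_pos.mpr htT).ne'
  have hr := tendsto_mul_self_div_sinh_mul hs
  have hk : Tendsto (fun γ => 2 * ((T - t) * γ)) (𝓝[>] 0) (𝓝[≠] 0) :=
    ((tendsto_const_mul_nhdsNE_zero (mul_ne_zero two_ne_zero hs)).mono_left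
      (nhdsGT_le_nhdsNE 0)).congr fun γ => mul_assoc _ _ _
  have h := (((tendsto_sinh_sub_self_div_pow_three.comp hk).const_mul (-(T - t))).mul
    (hr.pow 2)).sub_const (t / 2)
  have hlim : -(T - t) * (1 / 6) * 1 ^ 2 - t / 2 = -(T + 2 * t) / 6 := by ring
  rw [hlim] at h
  exact h.congr' (eventually_nhdsWithin_of_forall fun γ hγ => (mul_I3L_eq hγ htT).symm)

end Limits

theorem stmt_19_general (T fa fa' gb' μ0 η0 abar bbar a b : ℝ)
    (hfa : 0 < fa)
    (t : ℝ) (ht : t ∈ Set.Ico (0 : ℝ) T)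
    (γ : ℝ → ℝ) (hγ : ∀ φ : ℝ, γ φ = Real.sqrt (φ / fa))
    (S : ℝ → ℝ)
    (hS : ∀ φ : ℝ, 0 < φ →
        S φ = (-(γ φ) ^ 2 * fa' * μ0) *
            ((Real.exp (2 * γ φ * (t + T)) * (4 * (γ φ) ^ 2 * (T ^ 2 - t ^ 2) - 2)
                + Real.exp (4 * γ φ * t) * (1 - 2 * γ φ * t)
                + (2 * γ φ * t + 1) * Real.exp (4 * γ φ * T)) /
              (4 * (γ φ) ^ 2 * (Real.exp (2 * γ φ * t) - Real.exp (2 * γ φ * T)) ^ 2))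
          + (-(γ φ) ^ 2 * fa' * (a - abar - t * μ0)) *
            ((-Real.exp (4 * γ φ * t) - 4 * γ φ * (t - T) * Real.exp (2 * γ φ * (t + T))
                + Real.exp (4 * γ φ * T)) /
              (2 * γ φ * (Real.exp (2 * γ φ * t) - Real.exp (2 * γ φ * T)) ^ 2))
          + (γ φ * gb' * η0) *
            ((Real.exp (4 * γ φ * t) * (1 - 2 * γ φ * t)
                + 4 * γ φ * T * Real.exp (2 * γ φ * (t + T))
                - (2 * γ φ * t + 1) * Real.exp (4 * γ φ * T)) /
              (4 * (γ φ) ^ 2 * (Real.exp (2 * γ φ * t) - Real.exp (2 * γ φ * T)) ^ 2))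
          + (γ φ * gb' * (b - bbar - t * η0)) * (-(1 / (2 * γ φ)))) :
    Filter.Tendsto S (𝓝[>] 0)
      (𝓝 (-(fa' / (2 * (T - t))) * (2 * (a - abar) + μ0 * (T - t))
          - (gb' / 6) * (3 * (b - bbar) + η0 * (T - t)))) := by
  have htT : t < T := ht.2
  have hγ0 : Tendsto γ (𝓝[>] 0) (𝓝[>] 0) := funext hγ ▸ tendsto_sqrt_div_nhdsGT_zero hfa
  have h := ((((tendsto_sq_mul_I1L htT).const_mul (-(fa' * μ0))).add
    ((tendsto_sq_mul_I2L htT).const_mul (-(fa' * (a - abar - t * μ0))))).add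
    ((tendsto_mul_I3L htT).const_mul (gb' * η0))).add_const (-(gb' * (b - bbar - t * η0)) / 2)
  have hlim : -(fa' * μ0) * ((T + t) / (2 * (T - t)))
      + -(fa' * (a - abar - t * μ0)) * (1 / (T - t)) + gb' * η0 * (-(T + 2 * t) / 6)
      + -(gb' * (b - bbar - t * η0)) / 2
      = -(fa' / (2 * (T - t))) * (2 * (a - abar) + μ0 * (T - t))
          - (gb' / 6) * (3 * (b - bbar) + η0 * (T - t)) := by
    field_simp [(sub_pos.mpr htT).ne']
    ring
  rw [hlim] at h
  refine (h.comp hγ0).congr' (eventually_nhdsWithin_of_forall fun φ hφ => ?_)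
  have hγφ : γ φ ≠ 0 := (hγ φ ▸ sqrt_pos.mpr (div_pos hφ hfa)).ne'
  rw [Function.comp_apply, hS φ hφ]
  change _ = _ * I1L t T (γ φ) + _ * I2L t T (γ φ) + _ * I3L t T (γ φ) + _
  field_simp

theorem stmt_19 (T fa fa' gb' μ0 η0 abar bbar a b : ℝ)
    (hT : 0 < T) (hfa : 0 < fa)
    (t : ℝ) (ht : t ∈ Set.Ico (0 : ℝ) T)
    (γ : ℝ → ℝ) (hγ : ∀ φ : ℝ, γ φ = Real.sqrt (φ / fa))
    (S : ℝ → ℝ)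
    (hS : ∀ φ : ℝ, 0 < φ →
        S φ = (-(γ φ) ^ 2 * fa' * μ0) *
            ((Real.exp (2 * γ φ * (t + T)) * (4 * (γ φ) ^ 2 * (T ^ 2 - t ^ 2) - 2)
                + Real.exp (4 * γ φ * t) * (1 - 2 * γ φ * t)
                + (2 * γ φ * t + 1) * Real.exp (4 * γ φ * T)) /
              (4 * (γ φ) ^ 2 * (Real.exp (2 * γ φ * t) - Real.exp (2 * γ φ * T)) ^ 2))
          + (-(γ φ) ^ 2 * fa' * (a - abar - t * μ0)) *
            ((-Real.exp (4 * γ φ * t) - 4 * γ φ * (t - T) * Real.exp (2 * γ φ * (t + T))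
                + Real.exp (4 * γ φ * T)) /
              (2 * γ φ * (Real.exp (2 * γ φ * t) - Real.exp (2 * γ φ * T)) ^ 2))
          + (γ φ * gb' * η0) *
            ((Real.exp (4 * γ φ * t) * (1 - 2 * γ φ * t)
                + 4 * γ φ * T * Real.exp (2 * γ φ * (t + T))
                - (2 * γ φ * t + 1) * Real.exp (4 * γ φ * T)) /
              (4 * (γ φ) ^ 2 * (Real.exp (2 * γ φ * t) - Real.exp (2 * γ φ * T)) ^ 2))
          + (γ φ * gb' * (b - bbar - t * η0)) * (-(1 / (2 * γ φ)))) :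
    Filter.Tendsto S (𝓝[>] 0)
      (𝓝 (-(fa' / (2 * (T - t))) * (2 * (a - abar) + μ0 * (T - t))
          - (gb' / 6) * (3 * (b - bbar) + η0 * (T - t)))) :=
  stmt_19_general T fa fa' gb' μ0 η0 abar bbar a b hfa t ht γ hγ S hS
end
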